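/- arXiv:0806.3245 — 6 statements merged into one kernel-verified Lean document; each statement's English description precedes it below -/
import Mathlib

section
/- For every natural number m ≥ 1, the matrix product P_mᵀ · Y_m · P_m equals the m×m diagonal matrix whose k-th diagonal entry is k(k+1), i.e. P_mᵀ Y_m P_m = Diag(1·2, 2·3, 3·4, …, m·(m+1)). -/
open Matrix

/-- `Ym m` is the `m × m` integer matrix with all diagonal entries `2` and all
off-diagonal entries `1`. -/
def Ym (m : ℕ) : Matrix (Fin m) (Fin m) ℤ :=
  Matrix.of fun t u => if t = u then 2 else 1

/-- `Pm m` is the `m × m` upper triangular integer matrix whose `(i,i)`-entry is `i`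
(1-indexed), whose entries above the diagonal are `-1` and whose entries below the
diagonal are `0`. -/
def Pm (m : ℕ) : Matrix (Fin m) (Fin m) ℤ :=
  Matrix.of fun t u => if t = u then (t : ℤ) + 1 else if (t : ℕ) < (u : ℕ) then -1 else 0

lemma card_lt_aux {m : ℕ} (k : Fin m) :
    (Finset.univ.filter fun t : Fin m => (t : ℕ) < (k : ℕ)).card = (k : ℕ) := by
  have h : (Finset.univ.filter fun t : Fin m => (t : ℕ) < (k : ℕ)) = Finset.Iio k := by
    ext t
    simp only [Finset.mem_filter, Finset.mem_univ, true_and, Finset.mem_Iio, Fin.lt_def]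
  rw [h, Fin.card_Iio]

lemma sum_indicator_lt {m : ℕ} (k : Fin m) (c : ℤ) :
    (∑ t : Fin m, if (t : ℕ) < (k : ℕ) then c else 0) = (k : ℤ) * c := by
  rw [Finset.sum_ite, Finset.sum_const, Finset.sum_const, card_lt_aux]
  simp [mul_comm]

lemma colsum {m : ℕ} (j : Fin m) : (∑ t : Fin m, Pm m t j) = 1 := by
  have h : ∀ t : Fin m, Pm m t j =
      (if t = j then (j : ℤ) + 1 else 0) + (if (t : ℕ) < (j : ℕ) then -1 else 0) := by
    intro t
    simp only [Pm, Matrix.of_apply]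
    rcases eq_or_ne t j with rfl | hne
    · simp
    · simp [hne]
  rw [Finset.sum_congr rfl fun t _ => h t, Finset.sum_add_distrib,
    Finset.sum_ite_eq' Finset.univ j, sum_indicator_lt]
  simp

lemma prodsum_diag {m : ℕ} (i : Fin m) :
    (∑ t : Fin m, Pm m t i * Pm m t i) = ((i : ℤ) + 1) ^ 2 + (i : ℤ) := by
  have h : ∀ t : Fin m, Pm m t i * Pm m t i =
      (if t = i then ((i : ℤ) + 1) ^ 2 else 0) + (if (t : ℕ) < (i : ℕ) then 1 else 0) := by
    intro t
    simp only [Pm, Matrix.of_apply]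
    rcases eq_or_ne t i with rfl | hne
    · simp
      ring
    · rcases lt_or_ge (t : ℕ) (i : ℕ) with hlt | hge
      · simp [hne, hlt]
      · have h1 : ¬ (t : ℕ) < (i : ℕ) := not_lt.mpr hge
        simp [hne, h1]
  rw [Finset.sum_congr rfl fun t _ => h t, Finset.sum_add_distrib,
    Finset.sum_ite_eq' Finset.univ i, sum_indicator_lt]
  simp

lemma prodsum_off {m : ℕ} {i j : Fin m} (hij : (i : ℕ) < (j : ℕ)) :
    (∑ t : Fin m, Pm m t i * Pm m t j) = -1 := by
  have h : ∀ t : Fin m, Pm m t i * Pm m t j =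
      (if t = i then -((i : ℤ) + 1) else 0) + (if (t : ℕ) < (i : ℕ) then 1 else 0) := by
    intro t
    simp only [Pm, Matrix.of_apply]
    have hij' : i ≠ j := fun h => absurd (congrArg Fin.val h) (Nat.ne_of_lt hij)
    rcases eq_or_ne t i with rfl | hne
    · simp [hij', hij]
    · rcases lt_or_ge (t : ℕ) (i : ℕ) with hlt | hge
      · have htj2 : (t : ℕ) < (j : ℕ) := lt_trans hlt hij
        have htj : t ≠ j := fun h => absurd (congrArg Fin.val h) (Nat.ne_of_lt htj2)
        simp [hne, hlt, htj, htj2]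
      · have h1 : ¬ (t : ℕ) < (i : ℕ) := not_lt.mpr hge
        simp [hne, h1]
  rw [Finset.sum_congr rfl fun t _ => h t, Finset.sum_add_distrib,
    Finset.sum_ite_eq' Finset.univ i, sum_indicator_lt]
  simp

lemma prodsum {m : ℕ} (i j : Fin m) (hne : i ≠ j) :
    (∑ t : Fin m, Pm m t i * Pm m t j) = -1 := by
  rcases lt_or_gt_of_ne (fun h : (i : ℕ) = (j : ℕ) => hne (Fin.ext h)) with h | h
  · exact prodsum_off h
  · rw [Finset.sum_congr rfl fun t _ => mul_comm _ _]
    exact prodsum_off h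

/-- `P_mᵀ · Y_m · P_m = Diag(1·2, 2·3, …, m·(m+1))`. -/
theorem stmt0 (m : ℕ) (hm : 1 ≤ m) :
    (Pm m)ᵀ * Ym m * Pm m =
      Matrix.diagonal (fun t : Fin m => ((t : ℤ) + 1) * ((t : ℤ) + 2)) := by
  ext i j
  rw [Matrix.mul_apply]
  have hYP : ∀ u : Fin m, ((Pm m)ᵀ * Ym m) i u = 1 + Pm m u i := by
    intro u
    rw [Matrix.mul_apply]
    have h : ∀ t : Fin m, (Pm m)ᵀ i t * Ym m t u =
        Pm m t i + (if t = u then Pm m t i else 0) := by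
      intro t
      simp only [Matrix.transpose_apply, Ym, Matrix.of_apply]
      split <;> ring
    rw [Finset.sum_congr rfl fun t _ => h t, Finset.sum_add_distrib, colsum,
      Finset.sum_ite_eq' Finset.univ u]
    simp
  rw [Finset.sum_congr rfl fun u _ => by rw [hYP u]]
  have h2 : ∀ u : Fin m, (1 + Pm m u i) * Pm m u j = Pm m u j + Pm m u i * Pm m u j := by
    intro u; ring
  rw [Finset.sum_congr rfl fun u _ => h2 u, Finset.sum_add_distrib, colsum]
  rcases eq_or_ne i j with rfl | hne
  · rw [prodsum_diag, Matrix.diagonal_apply_eq]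
    ring
  · rw [prodsum i j hne, Matrix.diagonal_apply_ne _ hne]
    ring
end

section
/- Let n ≥ 2 and let p₁,…,p_n be arbitrary integers. The determinant of the (n−1)×(n−1) symmetric tridiagonal matrix M with diagonal entries M[i,i] = p_i + p_{i+1} (1 ≤ i ≤ n−1) and off-diagonal entries M[i,i+1] = M[i+1,i] = −p_{i+1} is the (n−1)-st elementary symmetric polynomial of p₁,…,p_n; that is, det M = σ_{n−1}(p₁,…,p_n) = Σ_{i=1}^{n} ∏_{j≠i} p_j. -/
/-- `esym p a b j` is the `j`-th elementary symmetric polynomial of the values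
`p a, p (a+1), …, p (b-1)`; in the 1-indexed notation of the paper, where `p i`
denotes `p_{i+1}`, this is `σ_j(p_{a+1},…,p_b)`. -/
def esym (p : ℕ → ℤ) (a b j : ℕ) : ℤ :=
  ∑ s ∈ (Finset.Ico a b).powersetCard j, ∏ i ∈ s, p i

/-- The `m × m` symmetric tridiagonal matrix with (0-indexed) diagonal entries
`p t + p (t+1)` and off-diagonal entries `M[t,t+1] = M[t+1,t] = -p (t+1)`;
in the paper's 1-indexed notation `M[i,i] = p_i + p_{i+1}`,
`M[i,i+1] = M[i+1,i] = -p_{i+1}`. -/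
def triM (p : ℕ → ℤ) (m : ℕ) : Matrix (Fin m) (Fin m) ℤ :=
  Matrix.of fun t u =>
    if (t : ℕ) = (u : ℕ) then p t + p ((t : ℕ) + 1)
    else if (t : ℕ) + 1 = (u : ℕ) then -p u
    else if (u : ℕ) + 1 = (t : ℕ) then -p t
    else 0

/-! ### Auxiliary machinery -/

/-- The entry function of `triM` at the level of naturals. -/
def triF (r : ℕ → ℤ) (t u : ℕ) : ℤ :=
  if t = u then r t + r (t + 1)
  else if t + 1 = u then -r u
  else if u + 1 = t then -r t
  else 0

lemma triM_apply (r : ℕ → ℤ) (m : ℕ) (i j : Fin m) : triM r m i j = triF r i j := rfl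

lemma triF_shift (r : ℕ → ℤ) (t u : ℕ) :
    triF r (t + 1) (u + 1) = triF (fun k => r (k + 1)) t u := by
  simp only [triF]; split_ifs <;> first | rfl | omega

lemma triF_shift2 (r : ℕ → ℤ) (t u : ℕ) :
    triF r (t + 2) (u + 2) = triF (fun k => r (k + 2)) t u := by
  simp only [triF]; split_ifs <;> first | rfl | omega

lemma sub_one (r : ℕ → ℤ) (m : ℕ) :
    (triM r (m + 1)).submatrix Fin.succ Fin.succ = triM (fun k => r (k + 1)) m := by
  ext i j; exact triF_shift r i j

lemma succAbove_one_zero (m : ℕ) : ((((0 : Fin (m+1)).succ).succAbove 0 : Fin (m+2)) : ℕ) = 0 := by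
  rw [Fin.succAbove, if_pos] ; · rfl
  · simp [Fin.lt_def]

lemma succAbove_one_succ (m : ℕ) (j : Fin m) :
    ((((0 : Fin (m+1)).succ).succAbove j.succ : Fin (m+2)) : ℕ) = (j : ℕ) + 2 := by
  rw [Fin.succAbove, if_neg] ; · rfl
  · simp [Fin.lt_def]

lemma det_triM_zero (r : ℕ → ℤ) : (triM r 0).det = 1 := Matrix.det_fin_zero

lemma det_triM_one (r : ℕ → ℤ) : (triM r 1).det = r 0 + r 1 := by
  rw [Matrix.det_fin_one]; rfl

lemma det_rec (r : ℕ → ℤ) (m : ℕ) :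
    (triM r (m + 2)).det =
      (r 0 + r 1) * (triM (fun k => r (k + 1)) (m + 1)).det
        - r 1 ^ 2 * (triM (fun k => r (k + 2)) m).det := by
  rw [Matrix.det_succ_row_zero, Fin.sum_univ_succ, Fin.sum_univ_succ]
  have htail : ∀ i : Fin m,
      (-1 : ℤ) ^ ((i.succ.succ : Fin (m+2)) : ℕ) * (triM r (m+2)) 0 i.succ.succ *
        ((triM r (m+2)).submatrix Fin.succ (i.succ.succ : Fin (m+2)).succAbove).det = 0 := by
    intro i
    have h0 : (triM r (m+2)) 0 i.succ.succ = 0 := by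
      rw [triM_apply, triF]
      rw [if_neg (by simp), if_neg (by simp), if_neg (by simp)]
    rw [h0]; ring
  rw [Finset.sum_eq_zero (fun i _ => htail i), add_zero]
  have h00 : (triM r (m+2)) 0 0 = r 0 + r 1 := by rw [triM_apply, triF]; simp
  have hm0 : ((triM r (m+2)).submatrix Fin.succ ((0 : Fin (m+2)).succAbove))
      = triM (fun k => r (k + 1)) (m + 1) := by
    rw [Fin.succAbove_zero]; exact sub_one r (m+1)
  have h01 : (triM r (m+2)) 0 ((0 : Fin (m+1)).succ) = -r 1 := by
    rw [triM_apply, triF]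
    rw [if_neg (by simp), if_pos (by simp)]
    rfl
  set N := (triM r (m+2)).submatrix Fin.succ ((0 : Fin (m+1)).succ).succAbove with hN
  have hNdet : N.det = (-r 1) * (triM (fun k => r (k + 2)) m).det := by
    rw [Matrix.det_succ_column_zero, Fin.sum_univ_succ]
    have htail2 : ∀ i : Fin m,
        (-1 : ℤ) ^ ((i.succ : Fin (m+1)) : ℕ) * N i.succ 0 *
          (N.submatrix (i.succ : Fin (m+1)).succAbove Fin.succ).det = 0 := by
      intro i
      have : N i.succ 0 = 0 := by
        show triF r (i.succ.succ : Fin (m+2)) ((((0 : Fin (m+1)).succ).succAbove 0 : Fin (m+2))) = 0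
        rw [succAbove_one_zero]
        rw [triF]
        rw [if_neg (by simp), if_neg (by simp), if_neg (by simp)]
      rw [this]; ring
    rw [Finset.sum_eq_zero (fun i _ => htail2 i), add_zero]
    have hN00 : N 0 0 = -r 1 := by
      show triF r ((0 : Fin (m+1)).succ : ℕ)
          ((((0 : Fin (m+1)).succ).succAbove 0 : Fin (m+2)) : ℕ) = -r 1
      rw [succAbove_one_zero, triF]
      rw [if_neg (by simp), if_neg (by simp), if_pos (by simp)]
      rfl
    have hNsub : N.submatrix ((0 : Fin (m+1)).succAbove) Fin.succ
        = triM (fun k => r (k + 2)) m := by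
      rw [Fin.succAbove_zero]
      ext i j
      show triF r ((i.succ.succ : Fin (m+2)) : ℕ)
          ((((0 : Fin (m+1)).succ).succAbove j.succ : Fin (m+2)) : ℕ)
        = triF (fun k => r (k + 2)) i j
      rw [succAbove_one_succ]
      exact triF_shift2 r i j
    rw [hN00, hNsub]
    simp
  rw [h00, hm0, h01, hNdet]
  simp only [Fin.val_zero, Fin.val_succ, pow_zero, pow_one]
  ring

lemma esym_zero (q : ℕ → ℤ) (a b : ℕ) : esym q a b 0 = 1 := by
  simp [esym]

lemma esym_of_lt (q : ℕ → ℤ) (a b j : ℕ) (h : b - a < j) : esym q a b j = 0 := by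
  unfold esym
  rw [Finset.powersetCard_eq_empty.2 (by rwa [Nat.card_Ico]), Finset.sum_empty]

lemma esym_split (q : ℕ → ℤ) {a b : ℕ} (h : a < b) (j : ℕ) :
    esym q a b (j + 1) = esym q (a + 1) b (j + 1) + q a * esym q (a + 1) b j := by
  unfold esym
  have hnm : a ∉ Finset.Ico (a + 1) b := by simp
  rw [← Finset.insert_Ico_add_one_left_eq_Ico h, Finset.powersetCard_succ_insert hnm]
  have hdisj : Disjoint ((Finset.Ico (a+1) b).powersetCard (j+1))
      (((Finset.Ico (a+1) b).powersetCard j).image (insert a)) := by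
    rw [Finset.disjoint_right]
    intro s hs hs'
    simp only [Finset.mem_image, Finset.mem_powersetCard] at hs hs'
    obtain ⟨t, _, rfl⟩ := hs
    exact hnm (hs'.1 (Finset.mem_insert_self a t))
  rw [Finset.sum_union hdisj]
  congr 1
  rw [Finset.sum_image, Finset.mul_sum]
  · apply Finset.sum_congr rfl
    intro s hs
    have has : a ∉ s := fun hmem => hnm ((Finset.mem_powersetCard.1 hs).1 hmem)
    rw [Finset.prod_insert has]
  · intro x hx y hy hxy
    have hax : a ∉ x := fun hmem => hnm ((Finset.mem_powersetCard.1 hx).1 hmem)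
    have hay : a ∉ y := fun hmem => hnm ((Finset.mem_powersetCard.1 hy).1 hmem)
    rw [← Finset.erase_insert hax, hxy, Finset.erase_insert hay]

lemma esym_shift (q : ℕ → ℤ) (c a b j : ℕ) :
    esym (fun k => q (k + c)) a b j = esym q (a + c) (b + c) j := by
  unfold esym
  rw [← Finset.map_add_right_Ico, Finset.powersetCard_map, Finset.sum_map]
  apply Finset.sum_congr rfl
  intro s _
  rw [show (Finset.mapEmbedding (addRightEmbedding c)).toEmbedding s
      = s.map (addRightEmbedding c) from rfl, Finset.prod_map]
  rfl

/-- The key determinant identity. -/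
lemma det_triM (m : ℕ) : ∀ q : ℕ → ℤ, (triM q m).det = esym q 0 (m + 1) m := by
  induction m using Nat.strong_induction_on with
  | _ m ih =>
    match m, ih with
    | 0, _ => intro q; rw [det_triM_zero, esym_zero]
    | 1, _ =>
      intro q
      rw [det_triM_one]
      rw [show (1 : ℕ) = 0 + 1 from rfl, esym_split q (by omega) 0,
        esym_split q (show (1:ℕ) < 2 by omega) 0, esym_zero, esym_zero,
        esym_of_lt q 2 2 1 (by omega)]
      ring
    | (m+2), ih =>
      intro q
      rw [det_rec, ih (m+1) (by omega) (fun k => q (k + 1)), ih m (by omega) (fun k => q (k + 2))]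
      rw [esym_shift q 1 0 (m + 2) (m + 1), esym_shift q 2 0 (m + 1) m]
      rw [show m + 2 + 1 = (m + 1) + 1 + 1 from rfl, esym_split q (show 0 < m + 3 by omega) (m + 1),
        esym_split q (show 1 < m + 3 by omega) m,
        esym_split q (show 1 < m + 3 by omega) (m + 1),
        esym_of_lt q 2 (m + 3) (m + 2) (by omega)]
      push_cast
      ring

lemma powersetCard_pred (m : ℕ) :
    (Finset.range (m + 2)).powersetCard (m + 1)
      = (Finset.range (m + 2)).image (fun i => (Finset.range (m + 2)).erase i) := by
  ext s
  simp only [Finset.mem_powersetCard, Finset.mem_image]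
  constructor
  · rintro ⟨hsub, hcard⟩
    have hc : (Finset.range (m + 2) \ s).card = 1 := by
      rw [Finset.card_sdiff_of_subset hsub, hcard, Finset.card_range]; omega
    obtain ⟨i, hi⟩ := Finset.card_eq_one.1 hc
    have him : i ∈ Finset.range (m + 2) := by
      have : i ∈ Finset.range (m + 2) \ s := hi ▸ Finset.mem_singleton_self i
      exact (Finset.mem_sdiff.1 this).1
    refine ⟨i, him, ?_⟩
    have : Finset.range (m + 2) \ (Finset.range (m + 2) \ s) = s :=
      Finset.sdiff_sdiff_eq_self hsub
    rw [hi] at this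
    rw [← this, Finset.sdiff_singleton_eq_erase]
  · rintro ⟨i, hi, rfl⟩
    refine ⟨Finset.erase_subset _ _, ?_⟩
    rw [Finset.card_erase_of_mem hi, Finset.card_range]
    omega

/-- `det M = σ_{n−1}(p₁,…,p_n) = Σ_{i=1}^{n} ∏_{j≠i} p_j`. -/
theorem stmt2 (n : ℕ) (hn : 2 ≤ n) (p : ℕ → ℤ) :
    (triM p (n - 1)).det = esym p 0 n (n - 1) ∧
      esym p 0 n (n - 1) = ∑ i ∈ Finset.range n, ∏ j ∈ (Finset.range n).erase i, p j := by
  obtain ⟨m, rfl⟩ : ∃ m, n = m + 2 := ⟨n - 2, by omega⟩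
  have h1 : m + 2 - 1 = m + 1 := by omega
  rw [h1]
  constructor
  · exact det_triM (m + 1) p
  · unfold esym
    rw [show Finset.Ico 0 (m + 2) = Finset.range (m + 2) by rw [Finset.range_eq_Ico],
      powersetCard_pred, Finset.sum_image]
    intro x hx y hy hxy
    by_contra hne
    have : x ∈ (Finset.range (m + 2)).erase y := Finset.mem_erase.2 ⟨hne, hx⟩
    rw [← show (Finset.range (m + 2)).erase x = (Finset.range (m + 2)).erase y from hxy] at this
    exact (Finset.notMem_erase x _) this
end

section
/- Let n ≥ 3 be odd, let p₁,…,p_{n−1} be odd integers and p_n ≠ 0 an even integer, and let M be the symmetrized Seifert linking matrix of the pretzel knot P(p₁,…,p_n) as defined in the context. If σ_{n−2}(p₁,…,p_{n−1}) ≠ 0, then there exists an invertible N×N matrix P over ℚ such that Pᵀ M P is the diagonal matrix whose diagonal entries are: −sign(p_i)·k·(k+1) for each 1 ≤ i ≤ n−1 and each 1 ≤ k ≤ |p_i|−1, together with the two entries −(p₁⋯p_{n−1})·σ_{n−2}(p₁,…,p_{n−1}) and σ_{n−2}(p₁,…,p_{n−1})·σ_{n−1}(p₁,…,p_n). -/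
open Matrix

/-- `sgn p i = s_{i+1} = -sign(p_{i+1})` in the 1-indexed notation of the paper. -/
def sgn (p : ℕ → ℤ) (i : ℕ) : ℤ := -(p i).sign

/-- Index type for the symmetrized Seifert linking matrix of the pretzel knot
`P(p₁,…,pₙ)` with `n` odd: pairs `(i,k)` with `1 ≤ i ≤ n−1`, `1 ≤ k ≤ |p_i|−1`
(0-indexed here), together with the two extra indices `γ = Sum.inr 0` and
`δ = Sum.inr 1`.  Its cardinality is `N = ρ₁+⋯+ρ_{n−1}+2` where `ρ_i = |p_i|−1`. -/
abbrev PIdx (n : ℕ) (p : ℕ → ℤ) : Type :=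
  (Σ i : Fin (n - 1), Fin ((p i).natAbs - 1)) ⊕ Fin 2

/-- Entries of the symmetrized Seifert linking matrix `M` of `P(p₁,…,pₙ)` (`n` odd):
`M[(i,k),(i,k)] = 2s_i`, `M[(i,k),(i,l)] = s_i` for `k ≠ l`, `M[(i,k),(j,l)] = 0` for
`i ≠ j`, `M[(i,k),γ] = M[γ,(i,k)] = s_i`, `M[(i,k),δ] = M[δ,(i,k)] = 0`,
`M[γ,γ] = s₁+⋯+s_{n−1}`, `M[γ,δ] = M[δ,γ] = 1`, `M[δ,δ] = p_n`. -/
def linkMf (n : ℕ) (p : ℕ → ℤ) : PIdx n p → PIdx n p → ℤ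
  | Sum.inl ⟨i, k⟩, Sum.inl ⟨j, l⟩ =>
      if (i : ℕ) = (j : ℕ) then (if (k : ℕ) = (l : ℕ) then 2 * sgn p i else sgn p i) else 0
  | Sum.inl ⟨i, _⟩, Sum.inr g => if g = 0 then sgn p i else 0
  | Sum.inr g, Sum.inl ⟨i, _⟩ => if g = 0 then sgn p i else 0
  | Sum.inr g, Sum.inr g' =>
      if g = 0 then (if g' = 0 then ∑ i ∈ Finset.range (n - 1), sgn p i else 1)
      else (if g' = 0 then 1 else p (n - 1))

/-- The symmetrized Seifert linking matrix of the pretzel knot `P(p₁,…,pₙ)`, `n` odd. -/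
def linkM (n : ℕ) (p : ℕ → ℤ) : Matrix (PIdx n p) (PIdx n p) ℤ :=
  Matrix.of (linkMf n p)

/-- The diagonal entries of the diagonalization: `−sign(p_i)·k·(k+1)` at each index
`(i,k)`, `−(p₁⋯p_{n−1})·σ_{n−2}(p₁,…,p_{n−1})` at `γ`, and
`σ_{n−2}(p₁,…,p_{n−1})·σ_{n−1}(p₁,…,pₙ)` at `δ`. -/
def diagOdd (n : ℕ) (p : ℕ → ℤ) : PIdx n p → ℤ :=
  Sum.elim
    (fun w => -(p w.1).sign * (((w.2 : ℕ) : ℤ) + 1) * (((w.2 : ℕ) : ℤ) + 2))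
    (fun g =>
      if g = 0 then -(∏ i ∈ Finset.range (n - 1), p i) * esym p 0 (n - 1) (n - 2)
      else esym p 0 (n - 1) (n - 2) * esym p 0 n (n - 1))

/- ===================== auxiliary lemmas ===================== -/

open Finset

def colq (m k : ℕ) : ℚ := if m = k then (k : ℚ) + 1 else if m < k then -1 else 0

lemma colq_of_gt {m k : ℕ} (h : k < m) : colq m k = 0 := by
  unfold colq; rw [if_neg (by omega), if_neg (by omega)]

lemma colq_sum {ρ k : ℕ} (hk : k < ρ) : ∑ m ∈ range ρ, colq m k = 1 := by
  rw [← Finset.sum_range_add_sum_Ico _ (show k + 1 ≤ ρ by omega)]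
  have h2 : ∑ m ∈ Ico (k + 1) ρ, colq m k = 0 :=
    Finset.sum_eq_zero (fun m hm => colq_of_gt (by simp only [Finset.mem_Ico] at hm; omega))
  have h1 : ∑ m ∈ range k, colq m k = -k := by
    rw [Finset.sum_congr rfl (fun m hm => by
      simp only [Finset.mem_range] at hm
      show colq m k = -1
      unfold colq; rw [if_neg (by omega), if_pos hm])]
    simp
  rw [h2, Finset.sum_range_succ, h1]
  unfold colq
  rw [if_pos rfl]
  ring

lemma colq_mul_sum_lt {ρ l k : ℕ} (hlk : l < k) (hk : k < ρ) :
    ∑ m ∈ range ρ, colq m l * colq m k = -1 := by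
  rw [← Finset.sum_range_add_sum_Ico _ (show l + 1 ≤ ρ by omega)]
  have h2 : ∑ m ∈ Ico (l + 1) ρ, colq m l * colq m k = 0 :=
    Finset.sum_eq_zero (fun m hm => by
      rw [colq_of_gt (by simp only [Finset.mem_Ico] at hm; omega), zero_mul])
  have h1 : ∑ m ∈ range l, colq m l * colq m k = l := by
    rw [Finset.sum_congr rfl (fun m hm => by
      simp only [Finset.mem_range] at hm
      show colq m l * colq m k = 1
      unfold colq
      rw [if_neg (by omega), if_pos hm, if_neg (by omega), if_pos (by omega)]; ring)]
    simp
  rw [h2, Finset.sum_range_succ, h1]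
  show (l : ℚ) + colq l l * colq l k + 0 = -1
  unfold colq
  rw [if_pos rfl, if_neg (by omega), if_pos hlk]
  ring

lemma colq_mul_sum {ρ l k : ℕ} (hl : l < ρ) (hk : k < ρ) :
    ∑ m ∈ range ρ, colq m l * colq m k =
      if l = k then ((k : ℚ) + 1) ^ 2 + k else -1 := by
  rcases lt_trichotomy l k with h | h | h
  · rw [if_neg (by omega), colq_mul_sum_lt h hk]
  · subst h
    rw [if_pos rfl]
    rw [← Finset.sum_range_add_sum_Ico _ (show l + 1 ≤ ρ by omega)]
    have h2 : ∑ m ∈ Ico (l + 1) ρ, colq m l * colq m l = 0 :=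
      Finset.sum_eq_zero (fun m hm => by
        rw [colq_of_gt (by simp only [Finset.mem_Ico] at hm; omega), zero_mul])
    have h1 : ∑ m ∈ range l, colq m l * colq m l = l := by
      rw [Finset.sum_congr rfl (fun m hm => by
        simp only [Finset.mem_range] at hm
        show colq m l * colq m l = 1
        unfold colq; rw [if_neg (by omega), if_pos hm]; ring)]
      simp
    rw [h2, Finset.sum_range_succ, h1]
    show (l : ℚ) + colq l l * colq l l + 0 = ((l:ℚ)+1)^2 + l
    unfold colq; rw [if_pos rfl]; ring
  · rw [if_neg (by omega)]
    rw [Finset.sum_congr rfl (fun m _ => mul_comm (colq m l) (colq m k))]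
    exact colq_mul_sum_lt h hl

lemma esym_card_sub_one (t : Finset ℕ) (ht : t.Nonempty) (f : ℕ → ℤ) :
    ∑ s ∈ t.powersetCard (t.card - 1), ∏ i ∈ s, f i = ∑ i ∈ t, ∏ j ∈ t.erase i, f j := by
  symm
  refine Finset.sum_bij (fun i _ => t.erase i) ?_ ?_ ?_ ?_
  · intro a ha
    rw [Finset.mem_powersetCard]
    exact ⟨Finset.erase_subset _ _, Finset.card_erase_of_mem ha⟩
  · intro a ha b hb h
    have h' : t.erase a = t.erase b := h
    by_contra hne
    have hmem : a ∈ t.erase b := Finset.mem_erase.mpr ⟨hne, ha⟩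
    rw [← h'] at hmem
    exact (Finset.mem_erase.mp hmem).1 rfl
  · intro s hs
    rw [Finset.mem_powersetCard] at hs
    have h1 : 1 ≤ t.card := Finset.card_pos.mpr ht
    have hne : (t \ s).Nonempty := by
      rw [← Finset.card_pos, Finset.card_sdiff_of_subset hs.1]
      omega
    obtain ⟨a, ha⟩ := hne
    rw [Finset.mem_sdiff] at ha
    refine ⟨a, ha.1, ?_⟩
    have hsub : s ⊆ t.erase a := Finset.subset_erase.mpr ⟨hs.1, ha.2⟩
    exact (Finset.eq_of_subset_of_card_le hsub (by
      rw [Finset.card_erase_of_mem ha.1, hs.2])).symm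
  · intro a ha; rfl

lemma sig_erase (n : ℕ) (p : ℕ → ℤ) (hn : 3 ≤ n) :
    esym p 0 (n-1) (n-2) = ∑ i ∈ range (n-1), ∏ j ∈ (range (n-1)).erase i, p j := by
  unfold esym
  rw [← Finset.range_eq_Ico]
  have h : n - 2 = (range (n-1)).card - 1 := by rw [Finset.card_range]; omega
  rw [h]
  exact esym_card_sub_one _ ⟨0, Finset.mem_range.mpr (by omega)⟩ p

lemma tau_split (n : ℕ) (p : ℕ → ℤ) (hn : 3 ≤ n) :
    esym p 0 n (n-1) = (∏ i ∈ range (n-1), p i) + p (n-1) * esym p 0 (n-1) (n-2) := by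
  have h : n - 1 = (range n).card - 1 := by rw [Finset.card_range]
  have hL : esym p 0 n (n-1) = ∑ i ∈ range n, ∏ j ∈ (range n).erase i, p j := by
    unfold esym
    rw [← Finset.range_eq_Ico, h]
    exact esym_card_sub_one _ ⟨0, Finset.mem_range.mpr (by omega)⟩ p
  rw [hL]
  have hsplit : range n = insert (n-1) (range (n-1)) := by
    ext x; simp only [Finset.mem_range, Finset.mem_insert]; omega
  have hnot : (n-1) ∉ range (n-1) := by simp
  rw [hsplit, Finset.sum_insert hnot, Finset.erase_insert hnot]
  rw [sig_erase n p hn, Finset.mul_sum]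
  congr 1
  refine Finset.sum_congr rfl (fun i hi => ?_)
  rw [Finset.mem_range] at hi
  have he : (insert (n-1) (range (n-1))).erase i = insert (n-1) ((range (n-1)).erase i) := by
    ext x
    simp only [Finset.mem_erase, Finset.mem_insert, Finset.mem_range]
    omega
  rw [he, Finset.prod_insert (by simp [Finset.mem_erase])]

lemma row_sum_split (S : ℚ) (f : ℕ → ℚ) (ρ l : ℕ) (hl : l < ρ) :
    ∑ m ∈ range ρ, (if l = m then 2 * S else S) * f m
      = S * (∑ m ∈ range ρ, f m) + S * f l := by
  rw [Finset.sum_congr rfl (fun m _ => show (if l = m then 2*S else S) * f m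
      = S * f m + (if m = l then S * f l else 0) by
    by_cases h : l = m
    · subst h; rw [if_pos rfl, if_pos rfl]; ring
    · rw [if_neg h, if_neg (fun hh => h hh.symm), add_zero])]
  rw [Finset.sum_add_distrib, ← Finset.mul_sum, Finset.sum_ite_eq' (range ρ) l,
    if_pos (Finset.mem_range.mpr hl)]

lemma natAbs_cast (a : ℤ) (ha : a ≠ 0) : (((a.natAbs - 1 : ℕ) : ℚ)) + 1 = |(a : ℚ)| := by
  have h1 : 1 ≤ a.natAbs := by
    have := Int.natAbs_eq_zero.not.mpr ha; omega
  rw [Nat.cast_sub h1]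
  push_cast [Nat.cast_natAbs]
  ring

noncomputable def Piq (n : ℕ) (p : ℕ → ℤ) : ℚ := ∏ i ∈ Finset.range (n - 1), (p i : ℚ)

noncomputable def sigq (n : ℕ) (p : ℕ → ℤ) : ℚ := ((esym p 0 (n - 1) (n - 2) : ℤ) : ℚ)

noncomputable def Pmat (n : ℕ) (p : ℕ → ℤ) : Matrix (PIdx n p) (PIdx n p) ℚ :=
  Matrix.of fun x y =>
    match x, y with
    | Sum.inl ⟨i, m⟩, Sum.inl ⟨j, k⟩ => if (i : ℕ) = (j : ℕ) then colq m k else 0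
    | Sum.inl ⟨i, _⟩, Sum.inr _ => -(Piq n p / |(p i : ℚ)|)
    | Sum.inr _, Sum.inl _ => 0
    | Sum.inr g, Sum.inr g' => if g = 0 then Piq n p else if g' = 0 then 0 else sigq n p

noncomputable def MPmat (n : ℕ) (p : ℕ → ℤ) : Matrix (PIdx n p) (PIdx n p) ℚ :=
  Matrix.of fun x y =>
    match x, y with
    | Sum.inl ⟨i, m⟩, Sum.inl ⟨j, k⟩ =>
        if (i : ℕ) = (j : ℕ) then ((sgn p i : ℤ) : ℚ) * (1 + colq m k) else 0
    | Sum.inl _, Sum.inr _ => 0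
    | Sum.inr g, Sum.inl ⟨j, _⟩ => if g = 0 then ((sgn p j : ℤ) : ℚ) else 0
    | Sum.inr g, Sum.inr g' =>
        if g = 0 then (if g' = 0 then -(sigq n p) else 0)
        else (if g' = 0 then Piq n p else Piq n p + (p (n - 1) : ℚ) * sigq n p)

lemma sum_PIdx (n : ℕ) (p : ℕ → ℤ) (f : PIdx n p → ℚ) :
    ∑ a : PIdx n p, f a =
      (∑ i : Fin (n - 1), ∑ m : Fin ((p (i : ℕ)).natAbs - 1), f (Sum.inl ⟨i, m⟩))
        + (f (Sum.inr 0) + f (Sum.inr 1)) := by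
  rw [Fintype.sum_sum_type, Fin.sum_univ_two, ← Finset.univ_sigma_univ, Finset.sum_sigma]

lemma sA_eq (n : ℕ) (p : ℕ → ℤ) (i : ℕ) (hi : i ∈ range (n-1)) (hpi : p i ≠ 0) :
    ((sgn p i : ℤ) : ℚ) * (Piq n p / |(p i : ℚ)|)
      = -(∏ j ∈ (range (n-1)).erase i, (p j : ℚ)) := by
  have habs : |(p i : ℚ)| ≠ 0 := by
    simp only [ne_eq, abs_eq_zero, Int.cast_eq_zero]; exact hpi
  have hprod : Piq n p = (p i : ℚ) * ∏ j ∈ (range (n-1)).erase i, (p j : ℚ) :=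
    (Finset.mul_prod_erase _ _ hi).symm
  have hsign : (((p i).sign : ℤ) : ℚ) * (p i : ℚ) = |(p i : ℚ)| := by
    rcases lt_trichotomy (p i) 0 with h | h | h
    · rw [Int.sign_eq_neg_one_of_neg h, abs_of_neg (by exact_mod_cast h : (p i : ℚ) < 0)]
      push_cast; ring
    · exact absurd h hpi
    · rw [Int.sign_eq_one_of_pos h, abs_of_pos (by exact_mod_cast h : (0:ℚ) < (p i : ℚ))]
      push_cast; ring
  have hcast : ((sgn p i : ℤ) : ℚ) = -(((p i).sign : ℤ) : ℚ) := by
    unfold sgn; push_cast; ring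
  rw [hcast, hprod]
  rw [show -((((p i).sign : ℤ):ℚ)) * ((p i : ℚ) * (∏ j ∈ (range (n-1)).erase i, (p j : ℚ)) / |(p i : ℚ)|)
    = -(((((p i).sign : ℤ):ℚ) * (p i : ℚ)) * (∏ j ∈ (range (n-1)).erase i, (p j : ℚ)) / |(p i : ℚ)|) from by ring]
  rw [hsign, mul_comm, mul_div_assoc, div_self habs, mul_one]

lemma mul1 (n : ℕ) (p : ℕ → ℤ) (hn : 3 ≤ n) (hp0 : ∀ i, i < n - 1 → p i ≠ 0) :
    (linkM n p).map (fun x : ℤ => (x : ℚ)) * Pmat n p = MPmat n p := by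
  ext x y
  rw [Matrix.mul_apply, sum_PIdx]
  rcases x with ⟨i, l⟩ | g <;> rcases y with ⟨j, k⟩ | g'
  · -- block row, block column
    simp only [linkM, linkMf, Pmat, MPmat, Matrix.map_apply, Matrix.of_apply, if_true,
      one_ne_zero, if_false, mul_zero, add_zero, Int.cast_ite, Int.cast_mul,
      Int.cast_ofNat, Int.cast_zero]
    rw [Finset.sum_eq_single_of_mem i (Finset.mem_univ i) (fun b _ hb => by
      rw [Finset.sum_eq_zero]
      intro m _
      rw [if_neg (fun h => hb (Fin.ext h.symm)), zero_mul])]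
    simp only [eq_self_iff_true, if_true]
    by_cases hij : (i : ℕ) = (j : ℕ)
    · have hij' : i = j := Fin.ext hij
      subst hij'
      simp only [eq_self_iff_true, if_true]
      rw [Fin.sum_univ_eq_sum_range
        (fun m => (if (l:ℕ) = m then 2 * ((sgn p (i:ℕ) : ℤ):ℚ) else ((sgn p (i:ℕ) : ℤ):ℚ))
          * colq m k)]
      rw [row_sum_split _ _ _ _ l.isLt, colq_sum k.isLt]
      ring
    · simp only [hij, if_false, mul_zero, Finset.sum_const_zero]
  · -- block row, extra column
    simp only [linkM, linkMf, Pmat, MPmat, Matrix.map_apply, Matrix.of_apply, if_true,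
      one_ne_zero, if_false, mul_zero, add_zero, Int.cast_ite, Int.cast_mul,
      Int.cast_ofNat, Int.cast_zero, zero_mul]
    rw [Finset.sum_eq_single_of_mem i (Finset.mem_univ i) (fun b _ hb => by
      rw [Finset.sum_eq_zero]
      intro m _
      rw [if_neg (fun h => hb (Fin.ext h.symm)), zero_mul])]
    simp only [eq_self_iff_true, if_true]
    have hpi := hp0 i i.isLt
    have habs : |(p (i:ℕ) : ℚ)| ≠ 0 := by
      simp only [ne_eq, abs_eq_zero, Int.cast_eq_zero]; exact hpi
    rw [Fin.sum_univ_eq_sum_range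
      (fun m => (if (l:ℕ) = m then 2 * ((sgn p (i:ℕ) : ℤ):ℚ) else ((sgn p (i:ℕ) : ℤ):ℚ))
        * -(Piq n p / |(p (i:ℕ) : ℚ)|))]
    rw [row_sum_split _ _ _ _ l.isLt, Finset.sum_const, Finset.card_range, nsmul_eq_mul]
    have hA := natAbs_cast (p (i:ℕ)) hpi
    have h2 : |(p (i:ℕ) : ℚ)| * (Piq n p / |(p (i:ℕ) : ℚ)|) = Piq n p := by
      field_simp
    calc ((sgn p (i:ℕ) : ℤ):ℚ) * ((((p (i:ℕ)).natAbs - 1 : ℕ):ℚ) * -(Piq n p / |(p (i:ℕ) : ℚ)|))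
          + ((sgn p (i:ℕ) : ℤ):ℚ) * -(Piq n p / |(p (i:ℕ) : ℚ)|)
          + ((sgn p (i:ℕ) : ℤ):ℚ) * Piq n p
        = -(((sgn p (i:ℕ) : ℤ):ℚ)) * (((((p (i:ℕ)).natAbs - 1 : ℕ):ℚ) + 1)
            * (Piq n p / |(p (i:ℕ) : ℚ)|)) + ((sgn p (i:ℕ) : ℤ):ℚ) * Piq n p := by ring
      _ = 0 := by rw [hA, h2]; ring
  · -- extra row, block column
    simp only [linkM, linkMf, Pmat, MPmat, Matrix.map_apply, Matrix.of_apply, if_true,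
      one_ne_zero, if_false, mul_zero, add_zero, Int.cast_ite, Int.cast_mul,
      Int.cast_ofNat, Int.cast_zero, Int.cast_one, zero_mul]
    rcases (show g = 0 ∨ g = 1 from by omega) with h | h <;> subst h <;>
      simp only [if_true, reduceIte, one_ne_zero, if_false, zero_mul,
        Finset.sum_const_zero]
    rw [Finset.sum_eq_single_of_mem j (Finset.mem_univ j) (fun b _ hb => by
      rw [Finset.sum_eq_zero]
      intro m _
      rw [if_neg (fun h => hb (Fin.ext h)), mul_zero])]
    simp only [eq_self_iff_true, if_true]
    rw [Fin.sum_univ_eq_sum_range (fun m => ((sgn p (j:ℕ) : ℤ):ℚ) * colq m k),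
      ← Finset.mul_sum, colq_sum k.isLt, mul_one]
  · -- extra row, extra column
    simp only [linkM, linkMf, Pmat, MPmat, Matrix.map_apply, Matrix.of_apply, if_true,
      one_ne_zero, if_false, mul_zero, add_zero, Int.cast_ite, Int.cast_mul,
      Int.cast_ofNat, Int.cast_zero, Int.cast_one, zero_mul]
    rcases (show g = 0 ∨ g = 1 from by omega) with h | h <;> subst h <;>
      simp only [if_true, reduceIte, one_ne_zero, if_false, zero_mul,
        Finset.sum_const_zero, one_mul, zero_add]
    swap
    · rcases (show g' = 0 ∨ g' = 1 from by omega) with h | h <;> subst h <;>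
        simp only [if_true, reduceIte, one_ne_zero, if_false, mul_zero, add_zero]
    -- γ row
    have hblock : ∀ x : Fin (n-1),
        ∑ _m : Fin ((p (x:ℕ)).natAbs - 1), ((sgn p (x:ℕ) : ℤ):ℚ) * -(Piq n p / |(p (x:ℕ) : ℚ)|)
          = ((((p (x:ℕ)).natAbs - 1 : ℕ):ℚ)) * (((sgn p (x:ℕ) : ℤ):ℚ) * -(Piq n p / |(p (x:ℕ) : ℚ)|)) := by
      intro x
      rw [Finset.sum_const, Finset.card_univ, Fintype.card_fin, nsmul_eq_mul]
    rw [Finset.sum_congr rfl (fun x _ => hblock x)]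
    rw [Fin.sum_univ_eq_sum_range (fun x => ((((p x).natAbs - 1 : ℕ):ℚ))
      * (((sgn p x : ℤ):ℚ) * -(Piq n p / |(p x : ℚ)|)))]
    rw [Int.cast_sum, Finset.sum_mul, ← add_assoc, ← Finset.sum_add_distrib]
    have hterm : ∀ x ∈ Finset.range (n-1),
        ((((p x).natAbs - 1 : ℕ):ℚ)) * (((sgn p x : ℤ):ℚ) * -(Piq n p / |(p x : ℚ)|))
          + ((sgn p x : ℤ):ℚ) * Piq n p
          = -(∏ j ∈ (Finset.range (n-1)).erase x, (p j : ℚ)) := by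
      intro x hx
      have hpx := hp0 x (Finset.mem_range.mp hx)
      have hA := natAbs_cast (p x) hpx
      have habs : |(p x : ℚ)| ≠ 0 := by
        simp only [ne_eq, abs_eq_zero, Int.cast_eq_zero]; exact hpx
      have h2 : Piq n p = |(p x : ℚ)| * (Piq n p / |(p x : ℚ)|) := by field_simp
      have h3 : ((((p x).natAbs - 1 : ℕ):ℚ)) * (((sgn p x : ℤ):ℚ) * -(Piq n p / |(p x : ℚ)|))
          + ((sgn p x : ℤ):ℚ) * Piq n p
          = ((sgn p x : ℤ):ℚ) * (Piq n p / |(p x : ℚ)|) := by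
        nth_rewrite 2 [h2]
        rw [← hA]
        ring
      rw [h3, sA_eq n p x hx hpx]
    rw [Finset.sum_congr rfl hterm]
    have hsig : ∑ x ∈ Finset.range (n-1), -(∏ j ∈ (Finset.range (n-1)).erase x, (p j : ℚ))
        = -(sigq n p) := by
      rw [Finset.sum_neg_distrib]
      unfold sigq
      rw [sig_erase n p hn]
      push_cast
      ring
    rw [hsig]
    rcases (show g' = 0 ∨ g' = 1 from by omega) with h | h <;> subst h <;>
      simp only [if_true, reduceIte, one_ne_zero, if_false, mul_zero, add_zero, mul_one] <;>
      ring

lemma mul2 (n : ℕ) (p : ℕ → ℤ) (hn : 3 ≤ n) (hp0 : ∀ i, i < n - 1 → p i ≠ 0) :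
    (Pmat n p)ᵀ * MPmat n p = Matrix.diagonal (fun z => ((diagOdd n p z : ℤ) : ℚ)) := by
  ext x y
  rw [Matrix.mul_apply]
  simp only [Matrix.transpose_apply]
  rw [sum_PIdx]
  rcases x with ⟨i, l⟩ | g <;> rcases y with ⟨j, k⟩ | g'
  · -- block/block
    simp only [Pmat, MPmat, Matrix.of_apply, mul_zero, zero_mul, add_zero]
    rw [Finset.sum_eq_single_of_mem i (Finset.mem_univ i) (fun b _ hb => by
      rw [Finset.sum_eq_zero]
      intro m _
      rw [if_neg (fun h => hb (Fin.ext h)), zero_mul])]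
    simp only [eq_self_iff_true, if_true]
    by_cases hij : (i : ℕ) = (j : ℕ)
    · have hij' : i = j := Fin.ext hij
      subst hij'
      simp only [eq_self_iff_true, if_true]
      rw [Fin.sum_univ_eq_sum_range (fun m =>
        colq m ↑l * (((sgn p (i:ℕ) : ℤ):ℚ) * (1 + colq m ↑k)))]
      rw [Finset.sum_congr rfl (fun m _ => show
          colq m ↑l * (((sgn p (i:ℕ) : ℤ):ℚ) * (1 + colq m ↑k))
          = ((sgn p (i:ℕ) : ℤ):ℚ) * colq m ↑l
            + ((sgn p (i:ℕ) : ℤ):ℚ) * (colq m ↑l * colq m ↑k) from by ring)]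
      rw [Finset.sum_add_distrib, ← Finset.mul_sum, ← Finset.mul_sum]
      rw [colq_sum l.isLt, colq_mul_sum l.isLt k.isLt]
      by_cases hlk : l = k
      · subst hlk
        rw [if_pos rfl, Matrix.diagonal_apply_eq]
        show _ = ((diagOdd n p (Sum.inl ⟨i, l⟩) : ℤ) : ℚ)
        unfold diagOdd sgn
        simp only [Sum.elim_inl]
        push_cast
        ring
      · have hne : (Sum.inl ⟨i,l⟩ : PIdx n p) ≠ Sum.inl ⟨i,k⟩ := by
          intro h
          injection h with h'
          exact hlk (eq_of_heq ((Sigma.mk.inj_iff.mp h').2))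
        rw [if_neg (fun h => hlk (Fin.ext h)), Matrix.diagonal_apply_ne _ hne]
        ring
    · rw [Finset.sum_eq_zero (fun m _ => by rw [if_neg hij, mul_zero]),
        Matrix.diagonal_apply_ne _ (by
          intro h
          injection h with h'
          exact hij (congrArg Fin.val (congrArg Sigma.fst h')))]
  · -- block/extra
    simp only [Pmat, MPmat, Matrix.of_apply, mul_zero, zero_mul, add_zero,
      Finset.sum_const_zero]
    rw [Matrix.diagonal_apply_ne _ (by simp)]
  · -- extra/block
    simp only [Pmat, MPmat, Matrix.of_apply, mul_zero, zero_mul, add_zero]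
    rw [Matrix.diagonal_apply_ne _ (by simp)]
    rw [Finset.sum_eq_single_of_mem j (Finset.mem_univ j) (fun b _ hb => by
      rw [Finset.sum_eq_zero]
      intro m _
      rw [if_neg (fun h => hb (Fin.ext h)), mul_zero])]
    simp only [eq_self_iff_true, if_true, reduceIte]
    have hpj := hp0 j j.isLt
    have habs : |(p (j:ℕ) : ℚ)| ≠ 0 := by
      simp only [ne_eq, abs_eq_zero, Int.cast_eq_zero]; exact hpj
    have hA := natAbs_cast (p (j:ℕ)) hpj
    have hsum : ∑ m : Fin ((p (j:ℕ)).natAbs - 1),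
        -(Piq n p / |(p (j:ℕ) : ℚ)|) * (((sgn p (j:ℕ) : ℤ):ℚ) * (1 + colq ↑m ↑k))
        = -(Piq n p / |(p (j:ℕ) : ℚ)|) * ((sgn p (j:ℕ) : ℤ):ℚ)
            * ((((p (j:ℕ)).natAbs - 1 : ℕ):ℚ) + 1) := by
      rw [Fin.sum_univ_eq_sum_range (fun m =>
        -(Piq n p / |(p (j:ℕ) : ℚ)|) * (((sgn p (j:ℕ) : ℤ):ℚ) * (1 + colq m ↑k)))]
      rw [Finset.sum_congr rfl (fun m _ => show
          -(Piq n p / |(p (j:ℕ) : ℚ)|) * (((sgn p (j:ℕ) : ℤ):ℚ) * (1 + colq m ↑k))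
          = -(Piq n p / |(p (j:ℕ) : ℚ)|) * ((sgn p (j:ℕ) : ℤ):ℚ)
            + -(Piq n p / |(p (j:ℕ) : ℚ)|) * ((sgn p (j:ℕ) : ℤ):ℚ) * colq m ↑k from by ring)]
      rw [Finset.sum_add_distrib, Finset.sum_const, Finset.card_range,
        nsmul_eq_mul, ← Finset.mul_sum, colq_sum k.isLt]
      ring
    rw [hsum, hA]
    have h2 : Piq n p / |(p (j:ℕ) : ℚ)| * |(p (j:ℕ) : ℚ)| = Piq n p := by field_simp
    calc -(Piq n p / |(p (j:ℕ) : ℚ)|) * ((sgn p (j:ℕ) : ℤ):ℚ) * |(p (j:ℕ) : ℚ)|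
          + (Piq n p * ((sgn p (j:ℕ) : ℤ):ℚ) + (if g = 0 then 0 else sigq n p) * 0)
        = -(Piq n p / |(p (j:ℕ) : ℚ)|  * |(p (j:ℕ) : ℚ)|) * ((sgn p (j:ℕ) : ℤ):ℚ)
          + Piq n p * ((sgn p (j:ℕ) : ℤ):ℚ) := by ring
      _ = 0 := by rw [h2]; ring
  · -- extra/extra
    simp only [Pmat, MPmat, Matrix.of_apply, mul_zero, zero_mul, add_zero,
      Finset.sum_const_zero, zero_add]
    rcases (show g = 0 ∨ g = 1 from by omega) with h | h <;> subst h <;>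
      rcases (show g' = 0 ∨ g' = 1 from by omega) with h | h <;> subst h <;>
      simp only [if_true, reduceIte, one_ne_zero, if_false, mul_zero, zero_mul,
        add_zero, zero_add]
    · rw [Matrix.diagonal_apply_eq]
      show _ = ((diagOdd n p (Sum.inr 0) : ℤ) : ℚ)
      unfold diagOdd Piq sigq
      simp only [Sum.elim_inr, if_pos rfl]
      push_cast
      ring
    · rw [Matrix.diagonal_apply_ne _ (by simp)]
    · rw [Matrix.diagonal_apply_ne _ (by simp)]
      ring
    · rw [Matrix.diagonal_apply_eq]
      show _ = ((diagOdd n p (Sum.inr 1) : ℤ) : ℚ)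
      unfold diagOdd
      simp only [Sum.elim_inr, one_ne_zero, if_false, reduceIte]
      rw [tau_split n p hn]
      unfold Piq sigq
      push_cast
      ring

/-- If `σ_{n−2}(p₁,…,p_{n−1}) ≠ 0`, then the symmetrized linking matrix of
`P(p₁,…,pₙ)` is congruent over `ℚ` to the stated diagonal matrix. -/
theorem stmt5 (n : ℕ) (hn : 3 ≤ n) (hodd : Odd n) (p : ℕ → ℤ)
    (hpodd : ∀ i, i < n - 1 → Odd (p i)) (hpeven : Even (p (n - 1)))
    (hpne : p (n - 1) ≠ 0) (hσ : esym p 0 (n - 1) (n - 2) ≠ 0) :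
    ∃ P : Matrix (PIdx n p) (PIdx n p) ℚ, IsUnit P ∧
      Pᵀ * (linkM n p).map (fun x : ℤ => (x : ℚ)) * P =
        Matrix.diagonal (fun z => ((diagOdd n p z : ℤ) : ℚ)) := by
  have hp0 : ∀ i, i < n - 1 → p i ≠ 0 := by
    intro i hi h0
    have := hpodd i hi
    rw [h0] at this
    exact (Int.not_odd_iff_even.mpr Even.zero) this
  have heq : (Pmat n p)ᵀ * (linkM n p).map (fun x : ℤ => (x : ℚ)) * Pmat n p =
      Matrix.diagonal (fun z => ((diagOdd n p z : ℤ) : ℚ)) := by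
    rw [Matrix.mul_assoc, mul1 n p hn hp0, mul2 n p hn hp0]
  refine ⟨Pmat n p, ?_, heq⟩
  -- invertibility
  have hτ : Odd (esym p 0 n (n - 1)) := by
    rw [tau_split n p hn]
    have hPP : Odd (∏ i ∈ Finset.range (n - 1), p i) :=
      Finset.prod_induction p Odd (fun a b ha hb => ha.mul hb) odd_one
        (fun i hi => hpodd i (Finset.mem_range.mp hi))
    exact hPP.add_even (hpeven.mul_right _)
  have hD : ∏ z : PIdx n p, ((diagOdd n p z : ℤ) : ℚ) ≠ 0 := by
    rw [Finset.prod_ne_zero_iff]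
    intro z _
    rw [ne_eq, Int.cast_eq_zero]
    rcases z with ⟨i, k⟩ | g
    · simp only [diagOdd, Sum.elim_inl]
      refine mul_ne_zero (mul_ne_zero ?_ ?_) ?_
      · simp only [ne_eq, neg_eq_zero, Int.sign_eq_zero_iff_zero]
        exact hp0 i i.isLt
      · intro h; omega
      · intro h; omega
    · rcases (show g = 0 ∨ g = 1 from by omega) with h | h <;> subst h <;>
        simp only [diagOdd, Sum.elim_inr, if_true, reduceIte, one_ne_zero, if_false]
      · refine mul_ne_zero ?_ hσ
        simp only [ne_eq, neg_eq_zero]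
        rw [← ne_eq, Finset.prod_ne_zero_iff]
        exact fun i hi => hp0 i (Finset.mem_range.mp hi)
      · refine mul_ne_zero hσ ?_
        intro h
        rw [h] at hτ
        exact (Int.not_odd_iff_even.mpr Even.zero) hτ
  have hdet := congrArg Matrix.det heq
  rw [Matrix.det_mul, Matrix.det_mul, Matrix.det_transpose, Matrix.det_diagonal] at hdet
  have hPdet : (Pmat n p).det ≠ 0 := by
    intro h
    rw [h, mul_zero] at hdet
    exact hD hdet.symm
  exact (Matrix.isUnit_iff_isUnit_det _).mpr (isUnit_iff_ne_zero.mpr hPdet)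
end

section
/- Let n ≥ 3 be odd, let p₁,…,p_{n−1} be odd integers and p_n ≠ 0 an even integer, and let M be the symmetrized Seifert linking matrix of the pretzel knot P(p₁,…,p_n) as defined in the context. If σ_{n−2}(p₁,…,p_{n−1}) = 0, then there exists an invertible N×N matrix Q over ℚ such that Qᵀ M Q is the block-diagonal matrix consisting of the diagonal entries −sign(p_i)·k·(k+1) for each 1 ≤ i ≤ n−1 and each 1 ≤ k ≤ |p_i|−1, together with one 2×2 block [[0, c],[c, p_n]] where c = |p₁⋯p_{n−1}|. -/
open Matrix

/-- The block diagonal target matrix: diagonal entries `−sign(p_i)·k·(k+1)` at the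
indices `(i,k)`, and the 2×2 block `[[0, c],[c, pₙ]]` with `c = |p₁⋯p_{n−1}|` at the
indices `γ, δ`. -/
def blockD (n : ℕ) (p : ℕ → ℤ) : Matrix (PIdx n p) (PIdx n p) ℚ :=
  Matrix.of fun x y =>
    match x, y with
    | Sum.inl z, Sum.inl w =>
        if z = w then
          ((-(p z.1).sign * (((z.2 : ℕ) : ℤ) + 1) * (((z.2 : ℕ) : ℤ) + 2) : ℤ) : ℚ)
        else 0
    | Sum.inl _, Sum.inr _ => 0
    | Sum.inr _, Sum.inl _ => 0
    | Sum.inr g, Sum.inr g' =>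
        if g = 0 then
          (if g' = 0 then 0 else ((|∏ i ∈ Finset.range (n - 1), p i| : ℤ) : ℚ))
        else
          (if g' = 0 then ((|∏ i ∈ Finset.range (n - 1), p i| : ℤ) : ℚ)
           else ((p (n - 1) : ℤ) : ℚ))

namespace Stmt6Aux
open Finset

/-! ### vE helper -/

def vE (l k : ℕ) : ℚ := if l ≤ k then 1 else if l = k + 1 then -((k : ℚ) + 1) else 0

lemma vE_of_le {l k : ℕ} (h : l ≤ k) : vE l k = 1 := if_pos h

lemma vE_succ (k : ℕ) : vE (k + 1) k = -((k : ℚ) + 1) := by simp [vE]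

lemma vE_of_gt {l k : ℕ} (h : k + 1 < l) : vE l k = 0 := by
  unfold vE; rw [if_neg (by omega), if_neg (by omega)]

lemma sum_vE_mul (g : ℕ → ℚ) {ρ k : ℕ} (hk : k + 1 < ρ) :
    ∑ m ∈ range ρ, vE m k * g m = (∑ m ∈ range (k + 1), g m) - ((k : ℚ) + 1) * g (k + 1) := by
  rw [← Finset.sum_subset (Finset.range_subset_range.mpr (show k + 2 ≤ ρ by omega))
      (fun x _ hx => by rw [vE_of_gt (by simp at hx ⊢; omega), zero_mul])]
  rw [Finset.sum_range_succ, vE_succ,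
    Finset.sum_congr rfl (fun x hx => by rw [vE_of_le (by simp at hx; omega), one_mul])]
  ring

lemma sum_vE {ρ k : ℕ} (hk : k + 1 < ρ) : ∑ m ∈ range ρ, vE m k = 0 := by
  have h := sum_vE_mul (fun _ => 1) hk
  simp only [mul_one, Finset.sum_const, Finset.card_range, nsmul_eq_mul] at h ⊢
  rw [h]; push_cast; ring

lemma sum_vE_vE_lt {ρ k k' : ℕ} (hk' : k' + 1 < ρ) (hkk : k < k') :
    ∑ m ∈ range ρ, vE m k * vE m k' = 0 := by
  rw [sum_vE_mul (fun m => vE m k') (by omega),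
    Finset.sum_congr rfl (fun x hx => vE_of_le (by simp at hx; omega)),
    vE_of_le (by omega)]
  simp

lemma sum_vE_vE {ρ k k' : ℕ} (hk : k + 1 < ρ) (hk' : k' + 1 < ρ) :
    ∑ m ∈ range ρ, vE m k * vE m k' =
      if k = k' then ((k : ℚ) + 1) * ((k : ℚ) + 2) else 0 := by
  rcases lt_trichotomy k k' with h | h | h
  · rw [if_neg h.ne, sum_vE_vE_lt hk' h]
  · subst h
    rw [if_pos rfl, sum_vE_mul (fun m => vE m k) hk,
      Finset.sum_congr rfl (fun x hx => vE_of_le (by simp at hx; omega)), vE_succ]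
    simp only [Finset.sum_const, Finset.card_range, nsmul_eq_mul, mul_one]
    push_cast; ring
  · rw [if_neg (Ne.symm h.ne), Finset.sum_congr rfl (fun x _ => mul_comm (vE x k) (vE x k')),
      sum_vE_vE_lt hk h]

/-! ### esym helper -/

lemma esym_eq_sum_erase (m : ℕ) (hm : 1 ≤ m) (p : ℕ → ℤ) :
    esym p 0 m (m - 1) = ∑ j ∈ Finset.range m, ∏ i ∈ (Finset.range m).erase j, p i := by
  unfold esym
  rw [Nat.Ico_zero_eq_range]
  refine (Finset.sum_bij (fun j _ => (Finset.range m).erase j) ?_ ?_ ?_ ?_).symm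
  · intro a ha
    rw [Finset.mem_powersetCard]
    exact ⟨Finset.erase_subset _ _, by rw [Finset.card_erase_of_mem ha, Finset.card_range]⟩
  · intro a ha b hb hab
    have hab' : (Finset.range m).erase a = (Finset.range m).erase b := hab
    by_contra hne
    have h2 : a ∈ (Finset.range m).erase b := Finset.mem_erase.mpr ⟨hne, ha⟩
    rw [← hab'] at h2
    exact (Finset.notMem_erase a _) h2
  · intro s hs
    rw [Finset.mem_powersetCard] at hs
    have hcard : ((Finset.range m) \ s).card = 1 := by
      rw [Finset.card_sdiff_of_subset hs.1, Finset.card_range, hs.2]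
      omega
    obtain ⟨a, ha⟩ := Finset.card_eq_one.mp hcard
    have haa : a ∈ Finset.range m \ s := ha ▸ Finset.mem_singleton_self a
    rw [Finset.mem_sdiff] at haa
    refine ⟨a, haa.1, ?_⟩
    show (Finset.range m).erase a = s
    refine (Finset.eq_of_subset_of_card_le (fun x hx => ?_) ?_).symm
    · exact Finset.mem_erase.mpr ⟨fun hxa => haa.2 (hxa ▸ hx), hs.1 hx⟩
    · rw [Finset.card_erase_of_mem haa.1, Finset.card_range, hs.2]
  · intro a _; rfl

lemma sum_inv_eq_zero {m : ℕ} (hm : 1 ≤ m) {p : ℕ → ℤ}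
    (hp : ∀ i, i < m → p i ≠ 0) (hσ : esym p 0 m (m - 1) = 0) :
    ∑ j ∈ Finset.range m, (1 / (p j : ℚ)) = 0 := by
  have hprod : (∏ i ∈ Finset.range m, (p i : ℚ)) ≠ 0 :=
    Finset.prod_ne_zero_iff.mpr fun i hi => by
      exact_mod_cast hp i (Finset.mem_range.mp hi)
  have key : (∑ j ∈ Finset.range m, (1 / (p j : ℚ))) * ∏ i ∈ Finset.range m, (p i : ℚ) = 0 := by
    rw [Finset.sum_mul]
    have : ∀ j ∈ Finset.range m, (1 / (p j : ℚ)) * ∏ i ∈ Finset.range m, (p i : ℚ)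
        = ∏ i ∈ (Finset.range m).erase j, (p i : ℚ) := by
      intro j hj
      rw [← Finset.mul_prod_erase _ _ hj]
      have : (p j : ℚ) ≠ 0 := by exact_mod_cast hp j (Finset.mem_range.mp hj)
      field_simp
    rw [Finset.sum_congr rfl this]
    have := esym_eq_sum_erase m hm p
    rw [hσ] at this
    have : ((0 : ℤ) : ℚ) = ((∑ j ∈ Finset.range m, ∏ i ∈ (Finset.range m).erase j, p i : ℤ) : ℚ) := by
      exact_mod_cast congrArg (fun z : ℤ => (z : ℚ)) this
    push_cast at this
    exact this.symm
  exact (mul_eq_zero.mp key).resolve_right hprod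

end Stmt6Aux

namespace Stmt6Aux
open Finset

/-! ### matrix definitions -/

def qE (q : ℤ) (l k : ℕ) : ℚ := if k = q.natAbs - 2 then 1 else vE l k

def pE (q : ℤ) (l k : ℕ) : ℚ := if k = q.natAbs - 2 then (q.natAbs : ℚ) else vE l k

def cQ (n : ℕ) (p : ℕ → ℤ) : ℚ := ((|∏ i ∈ Finset.range (n - 1), p i| : ℤ) : ℚ)

def Qmat (n : ℕ) (p : ℕ → ℤ) : Matrix (PIdx n p) (PIdx n p) ℚ :=
  Matrix.of fun a x =>
    match a, x with
    | Sum.inl ⟨i, l⟩, Sum.inl ⟨j, k⟩ => if (i : ℕ) = (j : ℕ) then qE (p j) l k else 0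
    | Sum.inl ⟨i, _⟩, Sum.inr g => if g = 0 then -(cQ n p) / ((p i).natAbs : ℚ) else 0
    | Sum.inr _, Sum.inl _ => 0
    | Sum.inr g, Sum.inr g' =>
        if g = 0 then (if g' = 0 then cQ n p else 0) else (if g' = 0 then 0 else 1)

def P1 (n : ℕ) (p : ℕ → ℤ) : Matrix (PIdx n p) (PIdx n p) ℚ :=
  Matrix.of fun a y =>
    match a, y with
    | Sum.inl ⟨i, l⟩, Sum.inl ⟨j, k⟩ =>
        if (i : ℕ) = (j : ℕ) then ((sgn p j : ℤ) : ℚ) * pE (p j) l k else 0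
    | Sum.inl _, Sum.inr _ => 0
    | Sum.inr g, Sum.inl ⟨j, k⟩ =>
        if g = 0 then
          (if (k : ℕ) = (p j).natAbs - 2 then
            ((sgn p j : ℤ) : ℚ) * (((p j).natAbs : ℚ) - 1) else 0)
        else 0
    | Sum.inr g, Sum.inr g' =>
        if g = 0 then (if g' = 0 then 0 else 1)
        else (if g' = 0 then cQ n p else ((p (n - 1) : ℤ) : ℚ))

lemma sum_PIdx {n : ℕ} {p : ℕ → ℤ} (f : PIdx n p → ℚ) :
    ∑ x : PIdx n p, f x =
      (∑ i : Fin (n - 1), ∑ k : Fin ((p i).natAbs - 1), f (Sum.inl ⟨i, k⟩))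
        + (f (Sum.inr 0) + f (Sum.inr 1)) := by
  rw [Fintype.sum_sum_type, Fin.sum_univ_two]
  congr 1
  rw [Finset.sum_sigma' Finset.univ (fun _ => Finset.univ)
    (fun i k => f (Sum.inl ⟨i, k⟩)), Finset.univ_sigma_univ]

/-! ### sums of matrix entries -/

lemma sum_qE {q : ℤ} (h1 : 1 ≤ q.natAbs) {k : ℕ} (hk : k < q.natAbs - 1) :
    ∑ m ∈ Finset.range (q.natAbs - 1), qE q m k =
      if k = q.natAbs - 2 then ((q.natAbs : ℚ) - 1) else 0 := by
  by_cases h : k = q.natAbs - 2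
  · rw [if_pos h]
    simp only [qE, if_pos h]
    rw [Finset.sum_const, Finset.card_range, nsmul_eq_mul, mul_one, Nat.cast_sub h1, Nat.cast_one]
  · rw [if_neg h]
    simp only [qE, if_neg h]
    exact sum_vE (by omega)

lemma sum_qE_pE {q : ℤ} {k k' : ℕ} (hk : k < q.natAbs - 1) (hk' : k' < q.natAbs - 1) :
    ∑ m ∈ Finset.range (q.natAbs - 1), qE q m k' * pE q m k =
      if k' = k then (((k : ℚ) + 1) * ((k : ℚ) + 2)) else 0 := by
  have h2 : 2 ≤ q.natAbs := by omega
  by_cases h : k = q.natAbs - 2 <;> by_cases h' : k' = q.natAbs - 2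
  · have hkk : k' = k := by omega
    rw [if_pos hkk]
    simp only [qE, pE, if_pos h, if_pos h', one_mul]
    rw [Finset.sum_const, Finset.card_range, nsmul_eq_mul]
    have : ((k : ℚ)) = (q.natAbs : ℚ) - 2 := by
      rw [h, Nat.cast_sub h2]; norm_num
    rw [this, Nat.cast_sub (by omega), Nat.cast_one]
    ring
  · rw [if_neg (by omega)]
    simp only [qE, pE, if_pos h, if_neg h']
    rw [← Finset.sum_mul, sum_vE (by omega), zero_mul]
  · rw [if_neg (by omega)]
    simp only [qE, pE, if_neg h, if_pos h', one_mul]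
    exact sum_vE (by omega)
  · simp only [qE, pE, if_neg h, if_neg h']
    rw [sum_vE_vE (by omega) (by omega)]
    by_cases hkk : k' = k
    · subst hkk; simp
    · rw [if_neg hkk, if_neg hkk]

lemma sum_row {q : ℤ} (s : ℚ) (h1 : 1 ≤ q.natAbs) {k : ℕ} (hk : k < q.natAbs - 1)
    (l : Fin (q.natAbs - 1)) :
    ∑ m : Fin (q.natAbs - 1), (if (l : ℕ) = (m : ℕ) then 2 * s else s) * qE q m k
      = s * pE q (l : ℕ) k := by
  have e1 : ∀ m : Fin (q.natAbs - 1), (if (l : ℕ) = (m : ℕ) then 2 * s else s) * qE q m k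
      = s * qE q m k + (if l = m then s * qE q m k else 0) := by
    intro m
    rcases eq_or_ne l m with rfl | h
    · rw [if_pos rfl, if_pos rfl]; ring
    · rw [if_neg (fun hh => h (Fin.val_inj.mp hh)), if_neg h]; ring
  rw [Finset.sum_congr rfl (fun m _ => e1 m), Finset.sum_add_distrib,
    Finset.sum_ite_eq, if_pos (Finset.mem_univ l), ← Finset.mul_sum,
    Fin.sum_univ_eq_sum_range (fun m => qE q m k), sum_qE h1 hk]
  by_cases h : k = q.natAbs - 2
  · rw [if_pos h]; simp only [qE, pE, if_pos h]; ring
  · rw [if_neg h]; simp only [qE, pE, if_neg h]; ring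

lemma sum_row_const (s β : ℚ) {ρ : ℕ} (l : Fin ρ) :
    ∑ m : Fin ρ, (if (l : ℕ) = (m : ℕ) then 2 * s else s) * β = s * β * ((ρ : ℚ) + 1) := by
  have e1 : ∀ m : Fin ρ, (if (l : ℕ) = (m : ℕ) then 2 * s else s) * β
      = s * β + (if l = m then s * β else 0) := by
    intro m
    rcases eq_or_ne l m with rfl | h
    · rw [if_pos rfl, if_pos rfl]; ring
    · rw [if_neg (fun hh => h (Fin.val_inj.mp hh)), if_neg h]; ring
  rw [Finset.sum_congr rfl (fun m _ => e1 m), Finset.sum_add_distrib,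
    Finset.sum_ite_eq, if_pos (Finset.mem_univ l), Finset.sum_const]
  simp only [Finset.card_univ, Fintype.card_fin, nsmul_eq_mul]
  ring

lemma sign_cast {q : ℤ} (hq : q ≠ 0) :
    ((q.sign : ℤ) : ℚ) = (q : ℚ) / (q.natAbs : ℚ) := by
  have hA : ((q.natAbs : ℚ)) ≠ 0 := Nat.cast_ne_zero.mpr (by
    have := Int.natAbs_pos.mpr hq; omega)
  rw [eq_div_iff hA, Nat.cast_natAbs]
  exact_mod_cast Int.sign_mul_abs q

lemma natAbs_sq_cast (q : ℤ) : ((q.natAbs : ℚ)) ^ 2 = (q : ℚ) ^ 2 := by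
  rw [Nat.cast_natAbs q, Int.cast_abs]
  exact sq_abs _

lemma per_term {q : ℤ} (hq : q ≠ 0) (c : ℚ) :
    ((q.natAbs - 1 : ℕ) : ℚ) * (((-q.sign : ℤ) : ℚ) * (-c / (q.natAbs : ℚ)))
      + ((-q.sign : ℤ) : ℚ) * c = -(c / (q : ℚ)) := by
  have h1 : 1 ≤ q.natAbs := Int.natAbs_pos.mpr hq
  have hA : ((q.natAbs : ℚ)) ≠ 0 := Nat.cast_ne_zero.mpr (by omega)
  have hq' : (q : ℚ) ≠ 0 := Int.cast_ne_zero.mpr hq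
  have hs : ((-q.sign : ℤ) : ℚ) = -((q : ℚ) / (q.natAbs : ℚ)) := by
    push_cast [sign_cast hq]; ring
  rw [hs, Nat.cast_sub h1, Nat.cast_one]
  have hsq := natAbs_sq_cast q
  field_simp
  linear_combination c * hsq

end Stmt6Aux

namespace Stmt6Aux
open Finset

variable {n : ℕ} {p : ℕ → ℤ}

lemma odd_ne_zero {q : ℤ} (h : Odd q) : q ≠ 0 := by
  rintro rfl; simp [Int.odd_iff] at h

/-! ### entry lemmas -/

section Entries
variable (n p)

abbrev Mq (n : ℕ) (p : ℕ → ℤ) : Matrix (PIdx n p) (PIdx n p) ℚ :=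
  (linkM n p).map (fun x : ℤ => (x : ℚ))

lemma Mq_bb (i j : Fin (n - 1)) (l : Fin ((p i).natAbs - 1)) (m : Fin ((p j).natAbs - 1)) :
    Mq n p (Sum.inl ⟨i, l⟩) (Sum.inl ⟨j, m⟩)
      = if (i : ℕ) = (j : ℕ) then
          (if (l : ℕ) = (m : ℕ) then 2 * ((sgn p i : ℤ) : ℚ) else ((sgn p i : ℤ) : ℚ))
        else 0 := by
  show ((if (i : ℕ) = (j : ℕ) then (if (l : ℕ) = (m : ℕ) then 2 * sgn p i else sgn p i)
      else 0 : ℤ) : ℚ)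
    = if (i : ℕ) = (j : ℕ) then
        (if (l : ℕ) = (m : ℕ) then 2 * ((sgn p i : ℤ) : ℚ) else ((sgn p i : ℤ) : ℚ))
      else 0
  split_ifs <;> push_cast <;> ring

lemma Mq_bg0 (i : Fin (n - 1)) (l : Fin ((p i).natAbs - 1)) :
    Mq n p (Sum.inl ⟨i, l⟩) (Sum.inr 0) = ((sgn p i : ℤ) : ℚ) := rfl

lemma Mq_bg1 (i : Fin (n - 1)) (l : Fin ((p i).natAbs - 1)) :
    Mq n p (Sum.inl ⟨i, l⟩) (Sum.inr 1) = 0 := rfl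

lemma Mq_gb0 (j : Fin (n - 1)) (m : Fin ((p j).natAbs - 1)) :
    Mq n p (Sum.inr 0) (Sum.inl ⟨j, m⟩) = ((sgn p j : ℤ) : ℚ) := rfl

lemma Mq_gb1 (j : Fin (n - 1)) (m : Fin ((p j).natAbs - 1)) :
    Mq n p (Sum.inr 1) (Sum.inl ⟨j, m⟩) = 0 := rfl

lemma Mq_gg00 : Mq n p (Sum.inr 0) (Sum.inr 0)
    = ((∑ i ∈ Finset.range (n - 1), sgn p i : ℤ) : ℚ) := rfl

lemma Mq_gg01 : Mq n p (Sum.inr 0) (Sum.inr 1) = 1 := rfl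

lemma Mq_gg10 : Mq n p (Sum.inr 1) (Sum.inr 0) = 1 := rfl

lemma Mq_gg11 : Mq n p (Sum.inr 1) (Sum.inr 1) = ((p (n - 1) : ℤ) : ℚ) := rfl

lemma Q_bb (i j : Fin (n - 1)) (l : Fin ((p i).natAbs - 1)) (k : Fin ((p j).natAbs - 1)) :
    Qmat n p (Sum.inl ⟨i, l⟩) (Sum.inl ⟨j, k⟩)
      = if (i : ℕ) = (j : ℕ) then qE (p j) l k else 0 := rfl

lemma Q_bg0 (i : Fin (n - 1)) (l : Fin ((p i).natAbs - 1)) :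
    Qmat n p (Sum.inl ⟨i, l⟩) (Sum.inr 0) = -(cQ n p) / ((p i).natAbs : ℚ) := rfl

lemma Q_bg1 (i : Fin (n - 1)) (l : Fin ((p i).natAbs - 1)) :
    Qmat n p (Sum.inl ⟨i, l⟩) (Sum.inr 1) = 0 := rfl

lemma Q_gb (g : Fin 2) (j : Fin (n - 1)) (k : Fin ((p j).natAbs - 1)) :
    Qmat n p (Sum.inr g) (Sum.inl ⟨j, k⟩) = 0 := rfl

lemma Q_gg00 : Qmat n p (Sum.inr 0) (Sum.inr 0) = cQ n p := rfl

lemma Q_gg01 : Qmat n p (Sum.inr 0) (Sum.inr 1) = 0 := rfl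

lemma Q_gg10 : Qmat n p (Sum.inr 1) (Sum.inr 0) = 0 := rfl

lemma Q_gg11 : Qmat n p (Sum.inr 1) (Sum.inr 1) = 1 := rfl

lemma P1_bb (i j : Fin (n - 1)) (l : Fin ((p i).natAbs - 1)) (k : Fin ((p j).natAbs - 1)) :
    P1 n p (Sum.inl ⟨i, l⟩) (Sum.inl ⟨j, k⟩)
      = if (i : ℕ) = (j : ℕ) then ((sgn p j : ℤ) : ℚ) * pE (p j) l k else 0 := rfl

lemma P1_bg (i : Fin (n - 1)) (l : Fin ((p i).natAbs - 1)) (g : Fin 2) :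
    P1 n p (Sum.inl ⟨i, l⟩) (Sum.inr g) = 0 := rfl

lemma P1_gb0 (j : Fin (n - 1)) (k : Fin ((p j).natAbs - 1)) :
    P1 n p (Sum.inr 0) (Sum.inl ⟨j, k⟩)
      = if (k : ℕ) = (p j).natAbs - 2 then
          ((sgn p j : ℤ) : ℚ) * (((p j).natAbs : ℚ) - 1) else 0 := rfl

lemma P1_gb1 (j : Fin (n - 1)) (k : Fin ((p j).natAbs - 1)) :
    P1 n p (Sum.inr 1) (Sum.inl ⟨j, k⟩) = 0 := rfl

lemma P1_gg00 : P1 n p (Sum.inr 0) (Sum.inr 0) = 0 := rfl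

lemma P1_gg01 : P1 n p (Sum.inr 0) (Sum.inr 1) = 1 := rfl

lemma P1_gg10 : P1 n p (Sum.inr 1) (Sum.inr 0) = cQ n p := rfl

lemma P1_gg11 : P1 n p (Sum.inr 1) (Sum.inr 1) = ((p (n - 1) : ℤ) : ℚ) := rfl

lemma D_bb (z w : Σ i : Fin (n - 1), Fin ((p i).natAbs - 1)) :
    blockD n p (Sum.inl z) (Sum.inl w)
      = if z = w then
          ((-(p z.1).sign * (((z.2 : ℕ) : ℤ) + 1) * (((z.2 : ℕ) : ℤ) + 2) : ℤ) : ℚ)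
        else 0 := rfl

lemma D_bg (z : Σ i : Fin (n - 1), Fin ((p i).natAbs - 1)) (g : Fin 2) :
    blockD n p (Sum.inl z) (Sum.inr g) = 0 := rfl

lemma D_gb (g : Fin 2) (z : Σ i : Fin (n - 1), Fin ((p i).natAbs - 1)) :
    blockD n p (Sum.inr g) (Sum.inl z) = 0 := rfl

lemma D_gg00 : blockD n p (Sum.inr 0) (Sum.inr 0) = 0 := rfl

lemma D_gg01 : blockD n p (Sum.inr 0) (Sum.inr 1) = cQ n p := rfl

lemma D_gg10 : blockD n p (Sum.inr 1) (Sum.inr 0) = cQ n p := rfl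

lemma D_gg11 : blockD n p (Sum.inr 1) (Sum.inr 1) = ((p (n - 1) : ℤ) : ℚ) := rfl

end Entries
end Stmt6Aux

namespace Stmt6Aux
open Finset

variable {n : ℕ} {p : ℕ → ℤ}

lemma per_term' {p : ℕ → ℤ} {i : ℕ} (hq : p i ≠ 0) (c : ℚ) :
    (((p i).natAbs - 1 : ℕ) : ℚ) * (((sgn p i : ℤ) : ℚ) * (-c / ((p i).natAbs : ℚ)))
      + ((sgn p i : ℤ) : ℚ) * c = -(c / (p i : ℚ)) := by
  simpa [sgn] using per_term hq c

lemma mulA (hn : 3 ≤ n) (hp : ∀ i, i < n - 1 → Odd (p i))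
    (hσ : esym p 0 (n - 1) (n - 2) = 0) :
    Mq n p * Qmat n p = P1 n p := by
  have hne : ∀ i : Fin (n - 1), p (i : ℕ) ≠ 0 := fun i => odd_ne_zero (hp i i.2)
  have h1 : ∀ i : Fin (n - 1), 1 ≤ (p (i : ℕ)).natAbs := fun i => Int.natAbs_pos.mpr (hne i)
  have hAne : ∀ i : Fin (n - 1), ((p (i : ℕ)).natAbs : ℚ) ≠ 0 :=
    fun i => Nat.cast_ne_zero.mpr (by have := h1 i; omega)
  have hsum0 : ∑ i ∈ Finset.range (n - 1), (1 / (p i : ℚ)) = 0 := by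
    refine sum_inv_eq_zero (by omega) (fun i hi => odd_ne_zero (hp i hi)) ?_
    have : n - 1 - 1 = n - 2 := by omega
    rw [this]; exact hσ
  ext a y
  rw [Matrix.mul_apply, sum_PIdx]
  obtain ⟨i, l⟩ | g := a <;> obtain ⟨j, k⟩ | g' := y
  · -- block row, block column
    rw [Mq_bg0, Mq_bg1, Q_gb, Q_gb, mul_zero, zero_mul, add_zero, add_zero, P1_bb]
    rw [Finset.sum_eq_single_of_mem j (Finset.mem_univ j)
      (fun b _ hbj => Finset.sum_eq_zero fun m _ => by
        rw [Q_bb, if_neg (fun h => hbj (Fin.val_inj.mp h)), mul_zero])]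
    by_cases hij : (i : ℕ) = (j : ℕ)
    · have hij' : i = j := Fin.val_inj.mp hij
      subst hij'
      simp only [Mq_bb, Q_bb, if_pos rfl, if_true, eq_self_iff_true]
      exact sum_row _ (h1 i) k.2 l
    · rw [if_neg hij]
      refine Finset.sum_eq_zero fun m _ => ?_
      rw [Mq_bb, if_neg hij, zero_mul]
  · -- block row, γ/δ column
    fin_cases g' <;> simp only [Fin.zero_eta, Fin.mk_one] <;> [skip; skip]
    · -- γ column
      rw [Mq_bg0, Mq_bg1, Q_gg00, Q_gg10, mul_zero, add_zero, P1_bg]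
      rw [Finset.sum_eq_single_of_mem i (Finset.mem_univ i)
        (fun b _ hbi => Finset.sum_eq_zero fun m _ => by
          rw [Mq_bb, if_neg (fun h => hbi (Fin.val_inj.mp h).symm), zero_mul])]
      simp only [Mq_bb, Q_bg0, if_pos rfl, if_true, eq_self_iff_true]
      rw [sum_row_const ((sgn p (i : ℕ) : ℤ) : ℚ) (-(cQ n p) / (((p (i : ℕ)).natAbs : ℚ))) l]
      rw [Nat.cast_sub (h1 i), Nat.cast_one, sub_add_cancel]
      field_simp
      rw [div_self (hAne i)]; ring
    · -- δ column
      simp only [Q_bg1, mul_zero, Q_gg01, Mq_bg1, zero_mul, Q_gg11, P1_bg,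
        Finset.sum_const_zero, add_zero, mul_one]
  · -- γ/δ row, block column
    fin_cases g <;> simp only [Fin.zero_eta, Fin.mk_one] <;> [skip; skip]
    · rw [Mq_gg00, Mq_gg01, Q_gb, Q_gb, mul_zero, mul_zero, add_zero, add_zero, P1_gb0]
      rw [Finset.sum_eq_single_of_mem j (Finset.mem_univ j)
        (fun b _ hbj => Finset.sum_eq_zero fun m _ => by
          rw [Q_bb, if_neg (fun h => hbj (Fin.val_inj.mp h)), mul_zero])]
      simp only [Mq_gb0, Q_bb, if_pos rfl, if_true, eq_self_iff_true]
      rw [← Finset.mul_sum, Fin.sum_univ_eq_sum_range (fun m => qE (p (j : ℕ)) m k) _,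
        sum_qE (h1 j) k.2, mul_ite, mul_zero]
    · rw [Mq_gg10, Mq_gg11, Q_gb, Q_gb, mul_zero, mul_zero, add_zero, add_zero, P1_gb1]
      exact Finset.sum_eq_zero fun b _ => Finset.sum_eq_zero fun m _ => by
        rw [Mq_gb1, zero_mul]
  · -- γ/δ row, γ/δ column
    fin_cases g <;> fin_cases g' <;> simp only [Fin.zero_eta, Fin.mk_one]
    · -- γγ
      rw [Mq_gg00, Q_gg00, Mq_gg01, Q_gg10, mul_zero, add_zero, P1_gg00]
      have hblock : ∀ i' : Fin (n - 1),
          ∑ m : Fin ((p (i' : ℕ)).natAbs - 1),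
            Mq n p (Sum.inr 0) (Sum.inl ⟨i', m⟩) * Qmat n p (Sum.inl ⟨i', m⟩) (Sum.inr 0)
          = (((p (i' : ℕ)).natAbs - 1 : ℕ) : ℚ)
              * (((sgn p (i' : ℕ) : ℤ) : ℚ) * (-(cQ n p) / ((p (i' : ℕ)).natAbs : ℚ))) := by
        intro i'
        simp only [Mq_gb0, Q_bg0]
        rw [Finset.sum_const, Finset.card_univ, Fintype.card_fin, nsmul_eq_mul]
      rw [Finset.sum_congr rfl (fun i' _ => hblock i')]
      rw [Fin.sum_univ_eq_sum_range (fun i => (((p i).natAbs - 1 : ℕ) : ℚ)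
        * (((sgn p i : ℤ) : ℚ) * (-(cQ n p) / ((p i).natAbs : ℚ)))) (n - 1)]
      rw [Int.cast_sum, Finset.sum_mul, ← Finset.sum_add_distrib]
      rw [Finset.sum_congr rfl (fun i hi =>
        per_term' (odd_ne_zero (hp i (Finset.mem_range.mp hi))) (cQ n p))]
      have : ∑ i ∈ Finset.range (n - 1), -(cQ n p / (p i : ℚ))
          = -(cQ n p * ∑ i ∈ Finset.range (n - 1), 1 / (p i : ℚ)) := by
        rw [Finset.mul_sum, ← Finset.sum_neg_distrib]
        exact Finset.sum_congr rfl fun i _ => by rw [mul_one_div]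
      rw [this, hsum0, mul_zero, neg_zero]
    · -- γδ
      rw [Mq_gg00, Q_gg01, Mq_gg01, Q_gg11, mul_zero, mul_one, P1_gg01]
      simp [Q_bg1]
    · -- δγ
      rw [Mq_gg10, Q_gg00, Mq_gg11, Q_gg10, mul_zero, one_mul, P1_gg10, add_zero]
      rw [Finset.sum_eq_zero fun b _ => Finset.sum_eq_zero fun m _ => by
        rw [Mq_gb1, zero_mul]]
      ring
    · -- δδ
      rw [Mq_gg10, Q_gg01, Mq_gg11, Q_gg11, mul_zero, mul_one, P1_gg11]
      simp [Q_bg1]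
end Stmt6Aux

namespace Stmt6Aux
open Finset

variable {n : ℕ} {p : ℕ → ℤ}

lemma sum_pE {q : ℤ} (h1 : 1 ≤ q.natAbs) {k : ℕ} (hk : k < q.natAbs - 1) :
    ∑ m ∈ Finset.range (q.natAbs - 1), pE q m k =
      if k = q.natAbs - 2 then ((q.natAbs : ℚ) - 1) * (q.natAbs : ℚ) else 0 := by
  by_cases h : k = q.natAbs - 2
  · rw [if_pos h]
    simp only [pE, if_pos h]
    rw [Finset.sum_const, Finset.card_range, nsmul_eq_mul, Nat.cast_sub h1, Nat.cast_one]
  · rw [if_neg h]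
    simp only [pE, if_neg h]
    exact sum_vE (by omega)

lemma mulB (hp : ∀ i, i < n - 1 → Odd (p i)) :
    (Qmat n p)ᵀ * P1 n p = blockD n p := by
  have hne : ∀ i : Fin (n - 1), p (i : ℕ) ≠ 0 := fun i => odd_ne_zero (hp i i.2)
  have h1 : ∀ i : Fin (n - 1), 1 ≤ (p (i : ℕ)).natAbs := fun i => Int.natAbs_pos.mpr (hne i)
  have hAne : ∀ i : Fin (n - 1), ((p (i : ℕ)).natAbs : ℚ) ≠ 0 :=
    fun i => Nat.cast_ne_zero.mpr (by have := h1 i; omega)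
  ext x y
  rw [Matrix.mul_apply]
  simp only [Matrix.transpose_apply]
  rw [sum_PIdx]
  obtain ⟨i, k'⟩ | g := x <;> obtain ⟨j, k⟩ | g' := y
  · -- block, block
    rw [Q_gb, Q_gb, zero_mul, zero_mul, add_zero, add_zero, D_bb]
    rw [Finset.sum_eq_single_of_mem j (Finset.mem_univ j)
      (fun b _ hbj => Finset.sum_eq_zero fun m _ => by
        rw [P1_bb, if_neg (fun h => hbj (Fin.val_inj.mp h)), mul_zero])]
    by_cases hij : (j : ℕ) = (i : ℕ)
    · have hij' : j = i := Fin.val_inj.mp hij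
      subst hij'
      simp only [Q_bb, P1_bb, if_pos rfl, if_true, eq_self_iff_true]
      rw [Finset.sum_congr rfl (fun (m : Fin ((p (j : ℕ)).natAbs - 1)) _ =>
        mul_left_comm (qE (p (j : ℕ)) m k') ((sgn p (j : ℕ) : ℤ) : ℚ) (pE (p (j : ℕ)) m k)),
        ← Finset.mul_sum,
        Fin.sum_univ_eq_sum_range (fun m => qE (p (j : ℕ)) m k' * pE (p (j : ℕ)) m k) _,
        sum_qE_pE k.2 k'.2]
      by_cases hkk : (k' : ℕ) = (k : ℕ)
      · have hkk' : k' = k := Fin.val_inj.mp hkk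
        subst hkk'
        rw [if_pos rfl, if_pos rfl]
        simp only [sgn]
        push_cast
        ring
      · rw [if_neg hkk, mul_zero, if_neg (fun h => hkk (by
          have := (Sigma.mk.inj_iff.mp h).2
          rw [eq_of_heq this]))]
    · rw [if_neg (fun h => hij (by
        have := (Sigma.mk.inj_iff.mp h).1
        rw [this]))]
      refine Finset.sum_eq_zero fun m _ => ?_
      rw [Q_bb, if_neg hij, zero_mul]
  · -- block, γ/δ
    fin_cases g' <;> simp only [Fin.zero_eta, Fin.mk_one]
    · rw [D_bg, Q_gb, Q_gb, zero_mul, zero_mul, add_zero, add_zero]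
      refine Finset.sum_eq_zero fun b _ => Finset.sum_eq_zero fun m _ => ?_
      rw [P1_bg, mul_zero]
    · rw [D_bg, Q_gb, Q_gb, zero_mul, zero_mul, add_zero, add_zero]
      refine Finset.sum_eq_zero fun b _ => Finset.sum_eq_zero fun m _ => ?_
      rw [P1_bg, mul_zero]
  · -- γ/δ, block
    fin_cases g <;> simp only [Fin.zero_eta, Fin.mk_one]
    · rw [D_gb, Q_gg00, Q_gg10, P1_gb0, P1_gb1, mul_zero, add_zero]
      rw [Finset.sum_eq_single_of_mem j (Finset.mem_univ j)
        (fun b _ hbj => Finset.sum_eq_zero fun m _ => by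
          rw [P1_bb, if_neg (fun h => hbj (Fin.val_inj.mp h)), mul_zero])]
      simp only [Q_bg0, P1_bb, if_pos rfl, if_true, eq_self_iff_true]
      rw [Finset.sum_congr rfl (fun (m : Fin ((p (j : ℕ)).natAbs - 1)) _ =>
        mul_left_comm (-(cQ n p) / ((p (j : ℕ)).natAbs : ℚ)) ((sgn p (j : ℕ) : ℤ) : ℚ)
          (pE (p (j : ℕ)) m k)), ← Finset.mul_sum, ← Finset.mul_sum,
        Fin.sum_univ_eq_sum_range (fun m => pE (p (j : ℕ)) m k) _, sum_pE (h1 j) k.2]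
      by_cases hk : (k : ℕ) = (p (j : ℕ)).natAbs - 2
      · rw [if_pos hk, if_pos hk]
        have hc : -(cQ n p) / ((p (j : ℕ)).natAbs : ℚ)
            * ((((p (j : ℕ)).natAbs : ℚ) - 1) * ((p (j : ℕ)).natAbs : ℚ))
            = -(cQ n p) * (((p (j : ℕ)).natAbs : ℚ) - 1) := by
          rw [div_mul_eq_mul_div, div_eq_iff (hAne j)]
          ring
        rw [hc]
        ring
      · rw [if_neg hk, if_neg hk]
        ring
    · rw [D_gb, Q_gg01, Q_gg11, P1_gb1, zero_mul, mul_zero, add_zero, add_zero]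
      refine Finset.sum_eq_zero fun b _ => Finset.sum_eq_zero fun m _ => ?_
      rw [Q_bg1, zero_mul]
  · -- γ/δ, γ/δ
    fin_cases g <;> fin_cases g' <;> simp only [Fin.zero_eta, Fin.mk_one]
    · rw [D_gg00, Q_gg00, Q_gg10, P1_gg00, P1_gg10, mul_zero, zero_mul, add_zero]
      rw [Finset.sum_eq_zero fun b _ => Finset.sum_eq_zero fun m _ => by
        rw [P1_bg (n := n) (p := p) b m 0, mul_zero]]
      ring
    · rw [D_gg01, Q_gg00, Q_gg10, P1_gg01, P1_gg11, mul_one, zero_mul]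
      rw [Finset.sum_eq_zero fun b _ => Finset.sum_eq_zero fun m _ => by
        rw [P1_bg (n := n) (p := p) b m 1, mul_zero]]
      ring
    · rw [D_gg10, Q_gg01, Q_gg11, P1_gg00, P1_gg10, mul_zero, one_mul]
      rw [Finset.sum_eq_zero fun b _ => Finset.sum_eq_zero fun m _ => by
        rw [P1_bg (n := n) (p := p) b m 0, mul_zero]]
      ring
    · rw [D_gg11, Q_gg01, Q_gg11, P1_gg01, P1_gg11, zero_mul, one_mul]
      rw [Finset.sum_eq_zero fun b _ => Finset.sum_eq_zero fun m _ => by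
        rw [P1_bg (n := n) (p := p) b m 1, mul_zero]]
      ring
end Stmt6Aux

namespace Stmt6Aux
open Finset

variable {n : ℕ} {p : ℕ → ℤ}

def Dinv (n : ℕ) (p : ℕ → ℤ) : Matrix (PIdx n p) (PIdx n p) ℚ :=
  Matrix.of fun x y =>
    match x, y with
    | Sum.inl z, Sum.inl w =>
        if z = w then
          (((-(p z.1).sign * (((z.2 : ℕ) : ℤ) + 1) * (((z.2 : ℕ) : ℤ) + 2) : ℤ) : ℚ))⁻¹
        else 0
    | Sum.inl _, Sum.inr _ => 0
    | Sum.inr _, Sum.inl _ => 0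
    | Sum.inr g, Sum.inr g' =>
        if g = 0 then
          (if g' = 0 then -((p (n - 1) : ℤ) : ℚ) / (cQ n p) ^ 2 else (cQ n p)⁻¹)
        else (if g' = 0 then (cQ n p)⁻¹ else 0)

lemma Dinv_bb (z w : Σ i : Fin (n - 1), Fin ((p i).natAbs - 1)) :
    Dinv n p (Sum.inl z) (Sum.inl w)
      = if z = w then
          (((-(p z.1).sign * (((z.2 : ℕ) : ℤ) + 1) * (((z.2 : ℕ) : ℤ) + 2) : ℤ) : ℚ))⁻¹
        else 0 := rfl

lemma Dinv_bg (z : Σ i : Fin (n - 1), Fin ((p i).natAbs - 1)) (g : Fin 2) :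
    Dinv n p (Sum.inl z) (Sum.inr g) = 0 := rfl

lemma Dinv_gb (g : Fin 2) (z : Σ i : Fin (n - 1), Fin ((p i).natAbs - 1)) :
    Dinv n p (Sum.inr g) (Sum.inl z) = 0 := rfl

lemma Dinv_gg00 : Dinv n p (Sum.inr 0) (Sum.inr 0) = -((p (n - 1) : ℤ) : ℚ) / (cQ n p) ^ 2 := rfl
lemma Dinv_gg01 : Dinv n p (Sum.inr 0) (Sum.inr 1) = (cQ n p)⁻¹ := rfl
lemma Dinv_gg10 : Dinv n p (Sum.inr 1) (Sum.inr 0) = (cQ n p)⁻¹ := rfl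
lemma Dinv_gg11 : Dinv n p (Sum.inr 1) (Sum.inr 1) = 0 := rfl

lemma sum_PIdx' (f : PIdx n p → ℚ) :
    ∑ x : PIdx n p, f x =
      (∑ z : Σ i : Fin (n - 1), Fin ((p i).natAbs - 1), f (Sum.inl z))
        + (f (Sum.inr 0) + f (Sum.inr 1)) := by
  rw [Fintype.sum_sum_type, Fin.sum_univ_two]

lemma DE (hp : ∀ i, i < n - 1 → Odd (p i)) :
    blockD n p * Dinv n p = 1 := by
  have hne : ∀ i : Fin (n - 1), p (i : ℕ) ≠ 0 := fun i => odd_ne_zero (hp i i.2)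
  have hcQ : cQ n p ≠ 0 := by
    unfold cQ
    rw [Int.cast_ne_zero, abs_ne_zero]
    exact Finset.prod_ne_zero_iff.mpr fun i hi => odd_ne_zero (hp i (Finset.mem_range.mp hi))
  ext x y
  rw [Matrix.mul_apply, sum_PIdx']
  obtain z | g := x <;> obtain w | g' := y
  · -- block block
    rw [D_bg, D_bg, zero_mul, zero_mul, add_zero, add_zero]
    have hterm : ∀ z' : Σ i : Fin (n - 1), Fin ((p i).natAbs - 1),
        blockD n p (Sum.inl z) (Sum.inl z') * Dinv n p (Sum.inl z') (Sum.inl w)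
        = if z = z' then
            ((-(p z.1).sign * (((z.2 : ℕ) : ℤ) + 1) * (((z.2 : ℕ) : ℤ) + 2) : ℤ) : ℚ)
              * Dinv n p (Sum.inl z') (Sum.inl w)
          else 0 := by
      intro z'
      rw [D_bb]
      split_ifs with h
      · rfl
      · rw [zero_mul]
    rw [Finset.sum_congr rfl fun z' _ => hterm z', Finset.sum_ite_eq,
      if_pos (Finset.mem_univ z), Dinv_bb]
    have hd : ((-(p z.1).sign * (((z.2 : ℕ) : ℤ) + 1) * (((z.2 : ℕ) : ℤ) + 2) : ℤ) : ℚ) ≠ 0 := by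
      rw [Int.cast_ne_zero]
      refine mul_ne_zero (mul_ne_zero (neg_ne_zero.mpr ?_) (by positivity)) (by positivity)
      simpa [Int.sign_eq_zero_iff_zero] using hne z.1
    by_cases hzw : z = w
    · subst hzw
      rw [if_pos rfl, Matrix.one_apply_eq, mul_inv_cancel₀ hd]
    · rw [if_neg hzw, mul_zero, Matrix.one_apply_ne (by simpa using hzw)]
  · -- block, γδ
    rw [Matrix.one_apply_ne (by simp)]
    rw [Finset.sum_eq_zero fun z' _ => by rw [Dinv_bg, mul_zero]]
    fin_cases g' <;> simp only [Fin.zero_eta, Fin.mk_one] <;>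
      rw [D_bg, D_bg, zero_mul, zero_mul] <;> ring
  · -- γδ, block
    rw [Matrix.one_apply_ne (by simp)]
    rw [Finset.sum_eq_zero fun z' _ => by rw [D_gb, zero_mul]]
    rw [Dinv_gb, Dinv_gb, mul_zero, mul_zero]
    ring
  · -- γδ γδ
    fin_cases g <;> fin_cases g' <;> simp only [Fin.zero_eta, Fin.mk_one] <;>
      rw [Finset.sum_eq_zero fun z' _ => by rw [D_gb, zero_mul]]
    · rw [D_gg00, D_gg01, Dinv_gg00, Dinv_gg10, Matrix.one_apply_eq, zero_mul]
      field_simp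
      norm_num
    · rw [D_gg00, D_gg01, Dinv_gg01, Dinv_gg11, Matrix.one_apply_ne (by simp), zero_mul, mul_zero]
      ring
    · rw [D_gg10, D_gg11, Dinv_gg00, Dinv_gg10, Matrix.one_apply_ne (by simp)]
      field_simp
      ring
    · rw [D_gg10, D_gg11, Dinv_gg01, Dinv_gg11, Matrix.one_apply_eq, mul_zero]
      field_simp
      norm_num
end Stmt6Aux


/-- If `σ_{n−2}(p₁,…,p_{n−1}) = 0`, then the symmetrized linking matrix of
`P(p₁,…,pₙ)` is congruent over `ℚ` to the block diagonal matrix consisting of the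
diagonal entries `−sign(p_i)·k·(k+1)` together with one block `[[0,c],[c,pₙ]]`,
`c = |p₁⋯p_{n−1}|`. -/
theorem stmt6 (n : ℕ) (hn : 3 ≤ n) (hodd : Odd n) (p : ℕ → ℤ)
    (hpodd : ∀ i, i < n - 1 → Odd (p i)) (hpeven : Even (p (n - 1)))
    (hpne : p (n - 1) ≠ 0) (hσ : esym p 0 (n - 1) (n - 2) = 0) :
    ∃ Q : Matrix (PIdx n p) (PIdx n p) ℚ, IsUnit Q ∧
      Qᵀ * (linkM n p).map (fun x : ℤ => (x : ℚ)) * Q = blockD n p := by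

  open Stmt6Aux in
  refine ⟨Qmat n p, ?_, ?_⟩
  case refine_2 =>
    rw [Matrix.mul_assoc, Stmt6Aux.mulA hn hpodd hσ, Stmt6Aux.mulB hpodd]
  case refine_1 =>
    have hmain : (Qmat n p)ᵀ * Stmt6Aux.Mq n p * Qmat n p = blockD n p := by
      rw [Matrix.mul_assoc, Stmt6Aux.mulA hn hpodd hσ, Stmt6Aux.mulB hpodd]
    have hDE := Stmt6Aux.DE (n := n) (p := p) hpodd
    have hD : IsUnit (blockD n p) :=
      ⟨⟨blockD n p, Stmt6Aux.Dinv n p, hDE, mul_eq_one_comm.mp hDE⟩, rfl⟩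
    have hDdet : (blockD n p).det ≠ 0 :=
      isUnit_iff_ne_zero.mp ((Matrix.isUnit_iff_isUnit_det _).mp hD)
    have hdet := congrArg Matrix.det hmain
    rw [Matrix.det_mul, Matrix.det_mul, Matrix.det_transpose] at hdet
    have hQdet : (Qmat n p).det ≠ 0 := by
      intro h
      rw [h, zero_mul, zero_mul] at hdet
      exact hDdet hdet.symm
    exact (Matrix.isUnit_iff_isUnit_det _).mpr (isUnit_iff_ne_zero.mpr hQdet)
end

section
/- Let n ≥ 3 be odd, let p₁,…,p_{n−1} be odd integers and p_n ≠ 0 an even integer, and let M be the symmetrized Seifert linking matrix of the pretzel knot P(p₁,…,p_n) as defined in the context. Let x ∈ ℤ^N be the vector whose coordinate at each index (i,k) equals −∏_{1≤j≤n−1, j≠i} |p_j|, whose coordinate at γ equals |p₁⋯p_{n−1}|, and whose coordinate at δ equals 0. Then e_{(i,k)}ᵀ M x = 0 for every index (i,k) (where e_{(i,k)} is the corresponding standard basis vector), and xᵀ M x = −(p₁⋯p_{n−1}) · σ_{n−2}(p₁,…,p_{n−1}). -/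
open Matrix

/-- The vector `X`: coordinate `−∏_{j≠i}|p_j|` at each index `(i,k)`, coordinate
`|p₁⋯p_{n−1}|` at `γ`, and coordinate `0` at `δ`. -/
def xvec (n : ℕ) (p : ℕ → ℤ) : PIdx n p → ℤ :=
  Sum.elim
    (fun w => -∏ j ∈ (Finset.range (n - 1)).erase (w.1 : ℕ), |p j|)
    (fun g => if g = 0 then ∏ j ∈ Finset.range (n - 1), |p j| else 0)


lemma pk_powersetCard_pred (s : Finset ℕ) (hs : s.Nonempty) :
    s.powersetCard (s.card - 1) = s.image s.erase := by
  have hc : 1 ≤ s.card := Finset.card_pos.mpr hs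
  ext t
  simp only [Finset.mem_powersetCard, Finset.mem_image]
  constructor
  · rintro ⟨hts, hcard⟩
    have h1 : (s \ t).card = 1 := by rw [Finset.card_sdiff_of_subset hts, hcard]; omega
    obtain ⟨a, ha⟩ := Finset.card_eq_one.mp h1
    have haS : a ∈ s := by
      have : a ∈ s \ t := ha ▸ Finset.mem_singleton_self a
      exact (Finset.mem_sdiff.mp this).1
    refine ⟨a, haS, ?_⟩
    rw [Finset.erase_eq, ← ha, Finset.sdiff_sdiff_self_left]
    exact Finset.inter_eq_right.mpr hts
  · rintro ⟨a, ha, rfl⟩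
    exact ⟨Finset.erase_subset _ _, by rw [Finset.card_erase_of_mem ha]⟩

lemma pk_esym (n : ℕ) (hn : 3 ≤ n) (p : ℕ → ℤ) :
    esym p 0 (n - 1) (n - 2) =
      ∑ i ∈ Finset.range (n - 1), ∏ j ∈ (Finset.range (n - 1)).erase i, p j := by
  have hne : (Finset.range (n - 1)).Nonempty := by
    rw [Finset.nonempty_range_iff]; omega
  have h2 : n - 2 = (Finset.range (n - 1)).card - 1 := by
    rw [Finset.card_range]; omega
  rw [esym, ← Finset.range_eq_Ico, h2, pk_powersetCard_pred _ hne, Finset.sum_image]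
  intro a ha b hb hab
  by_contra h
  have hmem : a ∈ (Finset.range (n - 1)).erase b := Finset.mem_erase.mpr ⟨h, ha⟩
  rw [← hab] at hmem
  exact Finset.notMem_erase a _ hmem

lemma pk_row (n : ℕ) (p : ℕ → ℤ)
    (hpodd : ∀ i, i < n - 1 → Odd (p i))
    (w : Σ i : Fin (n - 1), Fin ((p i).natAbs - 1)) :
    (linkM n p *ᵥ xvec n p) (Sum.inl w) = 0 := by
  classical
  obtain ⟨i, k⟩ := w
  have hne : p (i:ℕ) ≠ 0 := by
    intro h; have := hpodd i i.isLt; rw [h] at this; simp at this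
  have h1 : 1 ≤ (p (i:ℕ)).natAbs := Int.natAbs_pos.mpr hne
  have habs : ((((p (i:ℕ)).natAbs - 1 : ℕ) : ℤ) + 1) = |p (i:ℕ)| := by
    rw [Int.abs_eq_natAbs]; omega
  have key : |p (i:ℕ)| * ∏ j ∈ (Finset.range (n - 1)).erase (i:ℕ), |p j| =
      ∏ j ∈ Finset.range (n - 1), |p j| :=
    Finset.mul_prod_erase _ (fun j => |p j|) (Finset.mem_range.mpr i.isLt)
  simp only [Matrix.mulVec, dotProduct, Fintype.sum_sum_type, Fin.sum_univ_two]
  rw [← Finset.univ_sigma_univ, Finset.sum_sigma]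
  simp only [linkM, linkMf, xvec, Matrix.of_apply, Sum.elim_inl, Sum.elim_inr,
    if_true, one_ne_zero, if_false, mul_zero, add_zero]
  rw [Finset.sum_eq_single_of_mem i (Finset.mem_univ i)]
  · simp only [eq_self_iff_true, if_true]
    rw [← Finset.sum_mul]
    have hsum : ∑ x1 : Fin ((p (i:ℕ)).natAbs - 1),
        (if (k:ℕ) = (x1:ℕ) then 2 * sgn p (i:ℕ) else sgn p (i:ℕ)) =
        ((((p (i:ℕ)).natAbs - 1 : ℕ) : ℤ) + 1) * sgn p (i:ℕ) := by
      have step : ∀ x1 : Fin ((p (i:ℕ)).natAbs - 1),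
          (if (k:ℕ) = (x1:ℕ) then 2 * sgn p (i:ℕ) else sgn p (i:ℕ)) =
          sgn p (i:ℕ) + (if k = x1 then sgn p (i:ℕ) else 0) := by
        intro x1
        rcases eq_or_ne k x1 with h | h
        · rw [if_pos (by rw [h]), if_pos h]; ring
        · rw [if_neg (by simpa [Fin.ext_iff] using h), if_neg h]; ring
      rw [Finset.sum_congr rfl fun x1 _ => step x1, Finset.sum_add_distrib,
        Finset.sum_const, Finset.sum_ite_eq, if_pos (Finset.mem_univ k), Finset.card_univ,
        Fintype.card_fin]
      push_cast
      ring
    rw [hsum, habs]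
    linear_combination (-(sgn p (i:ℕ))) * key
  · intro b _ hb
    have h' : ¬((i:ℕ) = (b:ℕ)) := fun h => hb (Fin.val_injective h.symm)
    simp [h']
lemma pk_gamma (n : ℕ) (p : ℕ → ℤ)
    (hpodd : ∀ i, i < n - 1 → Odd (p i)) :
    (linkM n p *ᵥ xvec n p) (Sum.inr 0) =
      ∑ i ∈ Finset.range (n - 1), sgn p i * ∏ j ∈ (Finset.range (n - 1)).erase i, |p j| := by
  classical
  have hne : ∀ i, i < n - 1 → p i ≠ 0 := by
    intro i hi h; have := hpodd i hi; rw [h] at this; simp at this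
  have habs : ∀ i, i < n - 1 → ((((p i).natAbs - 1 : ℕ) : ℤ) + 1) = |p i| := by
    intro i hi
    have h1 : 1 ≤ (p i).natAbs := Int.natAbs_pos.mpr (hne i hi)
    rw [Int.abs_eq_natAbs]; omega
  have key : ∀ i, i < n - 1 → |p i| * ∏ j ∈ (Finset.range (n - 1)).erase i, |p j| =
      ∏ j ∈ Finset.range (n - 1), |p j| := fun i hi =>
    Finset.mul_prod_erase _ (fun j => |p j|) (Finset.mem_range.mpr hi)
  simp only [Matrix.mulVec, dotProduct, Fintype.sum_sum_type, Fin.sum_univ_two]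
  rw [← Finset.univ_sigma_univ, Finset.sum_sigma]
  simp only [linkM, linkMf, xvec, Matrix.of_apply, Sum.elim_inl, Sum.elim_inr,
    if_true, one_ne_zero, if_false, mul_zero, add_zero, Finset.sum_const,
    Finset.card_univ, Fintype.card_fin, mul_one]
  rw [Fin.sum_univ_eq_sum_range (fun i => ((p i).natAbs - 1) •
      (sgn p i * -∏ j ∈ (Finset.range (n - 1)).erase i, |p j|)),
    Finset.sum_mul, ← Finset.sum_add_distrib]
  refine Finset.sum_congr rfl fun i hi => ?_
  have hi' := Finset.mem_range.mp hi
  have h1 := habs i hi'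
  have h2 := key i hi'
  rw [nsmul_eq_mul]
  linear_combination (-(sgn p i)) * h2 +
    (-(sgn p i * ∏ j ∈ (Finset.range (n - 1)).erase i, |p j|)) * h1

lemma pk_delta (n : ℕ) (p : ℕ → ℤ) :
    (linkM n p *ᵥ xvec n p) (Sum.inr 1) = ∏ j ∈ Finset.range (n - 1), |p j| := by
  simp [Matrix.mulVec, dotProduct, Fintype.sum_sum_type, Fin.sum_univ_two,
    linkM, linkMf, xvec]

/-- `e_{(i,k)}ᵀ M x = 0` for every index `(i,k)` and
`xᵀ M x = −(p₁⋯p_{n−1})·σ_{n−2}(p₁,…,p_{n−1})`. -/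
theorem stmt7 (n : ℕ) (hn : 3 ≤ n) (hodd : Odd n) (p : ℕ → ℤ)
    (hpodd : ∀ i, i < n - 1 → Odd (p i)) (hpeven : Even (p (n - 1)))
    (hpne : p (n - 1) ≠ 0) :
    (∀ w : Σ i : Fin (n - 1), Fin ((p i).natAbs - 1),
        (linkM n p *ᵥ xvec n p) (Sum.inl w) = 0) ∧
      xvec n p ⬝ᵥ (linkM n p *ᵥ xvec n p) =
        -(∏ i ∈ Finset.range (n - 1), p i) * esym p 0 (n - 1) (n - 2) := by
  classical
  refine ⟨pk_row n p hpodd, ?_⟩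
  rw [dotProduct, Fintype.sum_sum_type, Fin.sum_univ_two]
  rw [← Finset.univ_sigma_univ, Finset.sum_sigma]
  have hz : ∀ x : Fin (n - 1), ∀ y : Fin ((p (x : ℕ)).natAbs - 1),
      xvec n p (Sum.inl ⟨x, y⟩) * (linkM n p *ᵥ xvec n p) (Sum.inl ⟨x, y⟩) = 0 := by
    intro x y; rw [pk_row n p hpodd ⟨x, y⟩, mul_zero]
  rw [Finset.sum_congr rfl fun x _ => Finset.sum_congr rfl fun y _ => hz x y]
  simp only [Finset.sum_const_zero, zero_add]
  rw [pk_gamma n p hpodd, pk_delta n p]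
  simp only [xvec, Sum.elim_inr, if_true, one_ne_zero, if_false, zero_mul, add_zero]
  rw [pk_esym n hn p, Finset.mul_sum, neg_mul, Finset.mul_sum, ← Finset.sum_neg_distrib]
  refine Finset.sum_congr rfl fun i hi => ?_
  have hi' := Finset.mem_range.mp hi
  have e1 : ∏ j ∈ Finset.range (n - 1), |p j| =
      |p i| * ∏ j ∈ (Finset.range (n - 1)).erase i, |p j| :=
    (Finset.mul_prod_erase _ (fun j => |p j|) (Finset.mem_range.mpr hi')).symm
  have e2 : ∏ j ∈ (Finset.range (n - 1)).erase i, |p j| =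
      |∏ j ∈ (Finset.range (n - 1)).erase i, p j| := (Finset.abs_prod _ _).symm
  have e3 : ∏ j ∈ Finset.range (n - 1), p j =
      p i * ∏ j ∈ (Finset.range (n - 1)).erase i, p j :=
    (Finset.mul_prod_erase _ p (Finset.mem_range.mpr hi')).symm
  have A := Int.sign_mul_abs (p i)
  have B := abs_mul_abs_self (∏ j ∈ (Finset.range (n - 1)).erase i, p j)
  rw [e1, e2, e3, sgn]
  linear_combination (-(|∏ j ∈ (Finset.range (n - 1)).erase i, p j| *
      |∏ j ∈ (Finset.range (n - 1)).erase i, p j|)) * A +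
    (-(p i)) * B
end

section
/- Let n ≥ 3 be odd, let p₁,…,p_{n−1} be odd integers and p_n ≠ 0 an even integer, and let M be the symmetrized Seifert linking matrix of the pretzel knot P(p₁,…,p_n) as defined in the context. Let x ∈ ℤ^N be the vector whose coordinate at each index (i,k) equals −∏_{1≤j≤n−1, j≠i} |p_j|, whose coordinate at γ equals |p₁⋯p_{n−1}|, and whose coordinate at δ equals 0, and let y ∈ ℤ^N be the vector that agrees with x at every index except δ, where its coordinate equals sign(p₁⋯p_{n−1}) · σ_{n−2}(p₁,…,p_{n−1}). Then e_{(i,k)}ᵀ M y = 0 for every index (i,k), xᵀ M y = 0, and yᵀ M y = σ_{n−2}(p₁,…,p_{n−1}) · σ_{n−1}(p₁,…,p_n). -/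
open Matrix

/-- The vector `Y`: it agrees with `X` everywhere except at `δ`, where its
coordinate is `sign(p₁⋯p_{n−1})·σ_{n−2}(p₁,…,p_{n−1})`. -/
def yvec (n : ℕ) (p : ℕ → ℤ) : PIdx n p → ℤ := fun z =>
  if z = Sum.inr 1 then (∏ j ∈ Finset.range (n - 1), p j).sign * esym p 0 (n - 1) (n - 2)
  else xvec n p z


lemma signProd (s : Finset ℕ) (p : ℕ → ℤ) :
    (∏ i ∈ s, p i).sign = ∏ i ∈ s, (p i).sign := by
  induction s using Finset.cons_induction with
  | empty => simp
  | cons a s ha ih => rw [Finset.prod_cons, Finset.prod_cons, Int.sign_mul, ih]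

lemma signSq {x : ℤ} (hx : x ≠ 0) : x.sign * x.sign = 1 := by
  rcases lt_trichotomy x 0 with h|h|h
  · simp [Int.sign_eq_neg_one_of_neg h]
  · exact absurd h hx
  · simp [Int.sign_eq_one_of_pos h]

lemma powersetCardPred (s : Finset ℕ) (hs : s.Nonempty) (f : ℕ → ℤ) :
    ∑ t ∈ s.powersetCard (s.card - 1), ∏ i ∈ t, f i
      = ∑ i ∈ s, ∏ j ∈ s.erase i, f j := by
  have himg : s.powersetCard (s.card - 1) = s.image (fun i => s.erase i) := by
    ext t
    simp only [Finset.mem_powersetCard, Finset.mem_image]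
    constructor
    · rintro ⟨hts, hcard⟩
      have hpos : 1 ≤ s.card := Finset.card_pos.mpr hs
      have hlt : t.card < s.card := by omega
      have hne : t ≠ s := by intro h; rw [h] at hlt; omega
      obtain ⟨i, his, hit⟩ := Finset.exists_of_ssubset (lt_of_le_of_ne hts hne)
      refine ⟨i, his, ?_⟩
      have hsub : t ⊆ s.erase i := fun x hx =>
        Finset.mem_erase.mpr ⟨fun h => hit (h ▸ hx), hts hx⟩
      exact (Finset.eq_of_subset_of_card_le hsub
        (by rw [Finset.card_erase_of_mem his]; omega)).symm
    · rintro ⟨i, his, rfl⟩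
      exact ⟨Finset.erase_subset _ _, Finset.card_erase_of_mem his⟩
  rw [himg, Finset.sum_image]
  intro i hi j hj h
  by_contra hne
  have : i ∈ s.erase j := Finset.mem_erase.mpr ⟨hne, hi⟩
  rw [← (id h : s.erase i = s.erase j)] at this
  exact (Finset.mem_erase.mp this).1 rfl

lemma esymPred (p : ℕ → ℤ) (m : ℕ) (hm : 1 ≤ m) :
    esym p 0 m (m - 1)
      = ∑ i ∈ Finset.range m, ∏ j ∈ (Finset.range m).erase i, p j := by
  unfold esym
  rw [← Finset.range_eq_Ico]
  have h := powersetCardPred (Finset.range m)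
    (Finset.nonempty_range_iff.mpr (by omega)) p
  rwa [Finset.card_range] at h

/-- `e_{(i,k)}ᵀ M y = 0` for every index `(i,k)`, `xᵀ M y = 0`, and
`yᵀ M y = σ_{n−2}(p₁,…,p_{n−1})·σ_{n−1}(p₁,…,pₙ)`. -/
theorem stmt8 (n : ℕ) (hn : 3 ≤ n) (hodd : Odd n) (p : ℕ → ℤ)
    (hpodd : ∀ i, i < n - 1 → Odd (p i)) (hpeven : Even (p (n - 1)))
    (hpne : p (n - 1) ≠ 0) :
    (∀ w : Σ i : Fin (n - 1), Fin ((p i).natAbs - 1),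
        (linkM n p *ᵥ yvec n p) (Sum.inl w) = 0) ∧
      xvec n p ⬝ᵥ (linkM n p *ᵥ yvec n p) = 0 ∧
      yvec n p ⬝ᵥ (linkM n p *ᵥ yvec n p) =
        esym p 0 (n - 1) (n - 2) * esym p 0 n (n - 1) := by
  have hp0 : ∀ i, i < n - 1 → p i ≠ 0 := by
    intro i hi h
    have := hpodd i hi
    rw [h] at this
    exact (Int.not_odd_iff_even.mpr Even.zero) this
  have hQ : ∀ i : Fin (n - 1),
      |p (i : ℕ)| * (∏ j ∈ (Finset.range (n - 1)).erase (i : ℕ), |p j|)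
        = ∏ j ∈ Finset.range (n - 1), |p j| :=
    fun i => Finset.mul_prod_erase _ (fun j => |p j|) (Finset.mem_range.mpr i.isLt)
  have hy_inl : ∀ w : Σ i : Fin (n - 1), Fin ((p i).natAbs - 1),
      yvec n p (Sum.inl w)
        = -∏ j ∈ (Finset.range (n - 1)).erase (w.1 : ℕ), |p j| := by
    intro w; simp [yvec, xvec]
  have hy_g : yvec n p (Sum.inr 0) = ∏ j ∈ Finset.range (n - 1), |p j| := by
    simp [yvec, xvec]
  have hy_d : yvec n p (Sum.inr 1)
      = (∏ j ∈ Finset.range (n - 1), p j).sign * esym p 0 (n - 1) (n - 2) := by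
    simp [yvec]
  have hmv : ∀ z : PIdx n p, (linkM n p *ᵥ yvec n p) z =
      (∑ j : Fin (n - 1), ∑ l : Fin ((p j).natAbs - 1),
          linkMf n p z (Sum.inl ⟨j, l⟩) * yvec n p (Sum.inl ⟨j, l⟩))
        + (linkMf n p z (Sum.inr 0) * yvec n p (Sum.inr 0)
            + linkMf n p z (Sum.inr 1) * yvec n p (Sum.inr 1)) := by
    intro z
    simp [Matrix.mulVec, dotProduct, linkM, Fintype.sum_sum_type,
      Fin.sum_univ_two, Finset.sum_sigma', Matrix.of_apply]
  have hρ : ∀ i : Fin (n - 1), (((p (i : ℕ)).natAbs - 1 : ℕ) : ℤ) = |p (i : ℕ)| - 1 := by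
    intro i
    have h1 : 1 ≤ (p (i : ℕ)).natAbs := Int.natAbs_pos.mpr (hp0 i i.isLt)
    rw [Nat.cast_sub h1, Int.abs_eq_natAbs]
    simp
  -- rows (i,k)
  have row_inl : ∀ w : Σ i : Fin (n - 1), Fin ((p i).natAbs - 1),
      (linkM n p *ᵥ yvec n p) (Sum.inl w) = 0 := by
    rintro ⟨i, k⟩
    rw [hmv]
    rw [Finset.sum_eq_single i ?h1 (by simp)]
    · have hstep : ∀ l : Fin ((p i).natAbs - 1),
          linkMf n p (Sum.inl ⟨i, k⟩) (Sum.inl ⟨i, l⟩) * yvec n p (Sum.inl ⟨i, l⟩)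
            = (if k = l then
                sgn p i * (-∏ j ∈ (Finset.range (n - 1)).erase (i : ℕ), |p j|) else 0)
              + sgn p i * (-∏ j ∈ (Finset.range (n - 1)).erase (i : ℕ), |p j|) := by
        intro l
        rw [hy_inl ⟨i, l⟩]
        show (if (i : ℕ) = (i : ℕ) then
            (if (k : ℕ) = (l : ℕ) then 2 * sgn p i else sgn p i) else 0) * _ = _
        rw [if_pos rfl]
        rcases eq_or_ne k l with h | h
        · rw [if_pos (by rw [h]), if_pos h]; ring
        · rw [if_neg (fun hh => h (Fin.ext hh)), if_neg h]; ring
      rw [Finset.sum_congr rfl (fun l _ => hstep l), Finset.sum_add_distrib,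
        Finset.sum_ite_eq, if_pos (Finset.mem_univ k), Finset.sum_const,
        Finset.card_univ, Fintype.card_fin]
      have hg : linkMf n p (Sum.inl ⟨i, k⟩) (Sum.inr 0) = sgn p i := rfl
      have hd : linkMf n p (Sum.inl ⟨i, k⟩) (Sum.inr 1) = 0 := rfl
      rw [hg, hd, hy_g, nsmul_eq_mul, hρ i, zero_mul]
      have h := hQ i
      simp only [sgn]
      linear_combination ((p (i : ℕ)).sign) * h
    · intro j _ hj
      apply Finset.sum_eq_zero
      intro l _
      show (if (i : ℕ) = (j : ℕ) then
          (if (k : ℕ) = (l : ℕ) then 2 * sgn p i else sgn p i) else 0)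
          * yvec n p (Sum.inl ⟨j, l⟩) = 0
      rw [if_neg (show ¬((i : ℕ) = (j : ℕ)) from fun hh => hj (Fin.ext hh.symm)),
        zero_mul]
  -- γ row
  have row_g : (linkM n p *ᵥ yvec n p) (Sum.inr 0) = 0 := by
    rw [hmv]
    have hgg : linkMf n p (Sum.inr 0) (Sum.inr 0)
        = ∑ i ∈ Finset.range (n - 1), sgn p i := rfl
    have hgd : linkMf n p (Sum.inr 0) (Sum.inr 1) = 1 := rfl
    have hinner : ∀ j : Fin (n - 1),
        (∑ l : Fin ((p j).natAbs - 1),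
          linkMf n p (Sum.inr 0) (Sum.inl ⟨j, l⟩) * yvec n p (Sum.inl ⟨j, l⟩))
          = (|p (j : ℕ)| - 1) *
              (sgn p j * (-∏ t ∈ (Finset.range (n - 1)).erase (j : ℕ), |p t|)) := by
      intro j
      have : ∀ l : Fin ((p j).natAbs - 1),
          linkMf n p (Sum.inr 0) (Sum.inl ⟨j, l⟩) * yvec n p (Sum.inl ⟨j, l⟩)
            = sgn p j * (-∏ t ∈ (Finset.range (n - 1)).erase (j : ℕ), |p t|) := by
        intro l
        rw [hy_inl ⟨j, l⟩]
        rfl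
      rw [Finset.sum_congr rfl (fun l _ => this l), Finset.sum_const,
        Finset.card_univ, Fintype.card_fin, nsmul_eq_mul, hρ j]
    rw [Finset.sum_congr rfl (fun j _ => hinner j), hgg, hgd, hy_g, hy_d]
    have hT : ∀ j ∈ Finset.range (n - 1),
        (p j).sign * ∏ t ∈ (Finset.range (n - 1)).erase j, |p t|
          = (∏ t ∈ Finset.range (n - 1), p t).sign
              * ∏ t ∈ (Finset.range (n - 1)).erase j, p t := by
      intro j hj
      have h2 : (∏ t ∈ (Finset.range (n - 1)).erase j, p t)
          = (∏ t ∈ (Finset.range (n - 1)).erase j, (p t).sign)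
            * ∏ t ∈ (Finset.range (n - 1)).erase j, |p t| := by
        rw [← Finset.prod_mul_distrib]
        exact Finset.prod_congr rfl fun t _ => (Int.sign_mul_abs _).symm
      have h3 : (∏ t ∈ (Finset.range (n - 1)).erase j, (p t).sign)
          * (∏ t ∈ (Finset.range (n - 1)).erase j, (p t).sign) = 1 := by
        rw [← Finset.prod_mul_distrib]
        exact Finset.prod_eq_one fun t ht =>
          signSq (hp0 t (Finset.mem_range.mp (Finset.mem_of_mem_erase ht)))
      rw [signProd, ← Finset.mul_prod_erase _ _ hj, h2]
      linear_combination
        (-((p j).sign * ∏ t ∈ (Finset.range (n - 1)).erase j, |p t|)) * h3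
    have hesym : esym p 0 (n - 1) (n - 2)
        = ∑ i ∈ Finset.range (n - 1), ∏ j ∈ (Finset.range (n - 1)).erase i, p j := by
      have h := esymPred p (n - 1) (by omega)
      rwa [show n - 1 - 1 = n - 2 from by omega] at h
    rw [hesym, Fin.sum_univ_eq_sum_range
      (fun j => (|p j| - 1) * (sgn p j * (-∏ t ∈ (Finset.range (n - 1)).erase j, |p t|)))]
    rw [hy_g] at *
    rw [one_mul, Finset.mul_sum, Finset.sum_mul, ← Finset.sum_add_distrib,
      ← Finset.sum_add_distrib]
    apply Finset.sum_eq_zero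
    intro j hj
    have hQ' : |p j| * (∏ t ∈ (Finset.range (n - 1)).erase j, |p t|)
        = ∏ t ∈ Finset.range (n - 1), |p t| := Finset.mul_prod_erase _ (fun t => |p t|) hj
    have hTj := hT j hj
    simp only [sgn]
    linear_combination ((p j).sign) * hQ' - hTj
  -- δ row
  have row_d : (linkM n p *ᵥ yvec n p) (Sum.inr 1)
      = (∏ j ∈ Finset.range (n - 1), |p j|)
        + p (n - 1) * ((∏ j ∈ Finset.range (n - 1), p j).sign
            * esym p 0 (n - 1) (n - 2)) := by
    rw [hmv]
    have h0 : ∀ j : Fin (n - 1), ∀ l : Fin ((p j).natAbs - 1),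
        linkMf n p (Sum.inr 1) (Sum.inl ⟨j, l⟩) = 0 := fun j l => rfl
    have hdg : linkMf n p (Sum.inr 1) (Sum.inr 0) = 1 := rfl
    have hdd : linkMf n p (Sum.inr 1) (Sum.inr 1) = p (n - 1) := rfl
    rw [hdg, hdd, hy_g, hy_d]
    simp [h0]
  refine ⟨row_inl, ?_, ?_⟩
  · rw [dotProduct, Fintype.sum_sum_type, Fin.sum_univ_two]
    rw [Finset.sum_eq_zero (fun w _ => by rw [row_inl w, mul_zero]), row_g]
    have hx1 : xvec n p (Sum.inr 1) = 0 := by simp [xvec]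
    rw [hx1]
    ring
  · rw [dotProduct, Fintype.sum_sum_type, Fin.sum_univ_two]
    rw [Finset.sum_eq_zero (fun w _ => by rw [row_inl w, mul_zero]), row_g, row_d, hy_d]
    have hsplit : esym p 0 n (n - 1)
        = (∏ j ∈ Finset.range (n - 1), p j)
          + p (n - 1) * esym p 0 (n - 1) (n - 2) := by
      have hσ : esym p 0 (n - 1) (n - 2)
          = ∑ i ∈ Finset.range (n - 1), ∏ j ∈ (Finset.range (n - 1)).erase i, p j := by
        have h := esymPred p (n - 1) (by omega)
        rwa [show n - 1 - 1 = n - 2 from by omega] at h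
      have h := esymPred p n (by omega)
      have hr : Finset.range n = insert (n - 1) (Finset.range (n - 1)) := by
        rw [← Finset.range_add_one]; congr 1; omega
      rw [hr, Finset.sum_insert Finset.notMem_range_self,
        Finset.erase_insert Finset.notMem_range_self] at h
      have hother : ∀ i ∈ Finset.range (n - 1),
          ∏ j ∈ (insert (n - 1) (Finset.range (n - 1))).erase i, p j
            = p (n - 1) * ∏ j ∈ (Finset.range (n - 1)).erase i, p j := by
        intro i hi
        have hne : (n - 1) ≠ i := fun h => by
          rw [← h] at hi; exact absurd hi Finset.notMem_range_self
        rw [Finset.erase_insert_of_ne hne,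
          Finset.prod_insert (fun h =>
            Finset.notMem_range_self (Finset.mem_of_mem_erase h))]
      rw [Finset.sum_congr rfl hother, ← Finset.mul_sum, ← hσ] at h
      exact h.trans (by ring)
    rw [hsplit]
    have hsma : (∏ j ∈ Finset.range (n - 1), p j).sign
        * |∏ j ∈ Finset.range (n - 1), p j| = ∏ j ∈ Finset.range (n - 1), p j :=
      Int.sign_mul_abs _
    have habs : ∏ j ∈ Finset.range (n - 1), |p j|
        = |∏ j ∈ Finset.range (n - 1), p j| := (Finset.abs_prod _ _).symm
    have hprodne : (∏ j ∈ Finset.range (n - 1), p j) ≠ 0 :=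
      Finset.prod_ne_zero_iff.mpr fun j hj => hp0 j (Finset.mem_range.mp hj)
    have hSS := signSq hprodne
    have hy1 : yvec n p (Sum.inr 1)
        = (∏ j ∈ Finset.range (n - 1), p j).sign * esym p 0 (n - 1) (n - 2) := hy_d
    rw [habs]
    set S := (∏ j ∈ Finset.range (n - 1), p j).sign
    set σ := esym p 0 (n - 1) (n - 2)
    linear_combination σ * hsma + p (n - 1) * σ * σ * hSS
end
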